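/- arXiv:2003.04652 — 10 statements merged into one kernel-verified Lean document; each statement's English description precedes it below -/
import Mathlib

section
/- Let L1 and L2 be finite-dimensional real Lie algebras, let K1 ⊆ L1 and K2 ⊆ L2 be Lie ideals with dim K1 = dim L1 − 1 and dim K2 = dim L2 − 1, and let y1 ∈ L1 ∖ K1 and y2 ∈ L2 ∖ K2. If there exist a Lie algebra isomorphism σ : K1 → K2, a scalar α ∈ ℝ ∖ {0}, and an element u ∈ K2 such that σ([y1, x]) = α·[y2, σ(x)] + [u, σ(x)] for all x ∈ K1, then L1 and L2 are isomorphic as Lie algebras. -/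
/-!
Write `L₁ = K₁ ⊕ ℝ y₁` and put `w = α • y₂ + u`. The hypothesis says exactly that
`σ ∘ ad y₁ = ad w ∘ σ` on `K₁`, so `k + t • y₁ ↦ σ k + t • w` is a Lie algebra morphism.
Its image contains `K₂` and `w ∉ K₂`, so it is onto, and the dimensions agree.
-/

open Module Submodule

theorem Submodule.isCompl_span_singleton_of_finrank_eq_add_one {K V : Type*} [DivisionRing K]
    [AddCommGroup V] [Module K V] [FiniteDimensional K V] {p : Submodule K V}
    (hp : finrank K V = finrank K p + 1) {v : V} (hv : v ∉ p) : IsCompl p (K ∙ v) :=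
  ⟨disjoint_span_singleton_of_notMem hv,
    codisjoint_iff.mpr <| eq_top_of_finrank_eq <| by rw [finrank_sup_span_singleton hv, hp]⟩

section

variable {R L L' : Type*} [CommRing R] [LieRing L] [LieAlgebra R L] [LieRing L'] [LieAlgebra R L']

theorem LinearMap.map_lie_of_codisjoint_span_singleton (f : L →ₗ[R] L') {p : Submodule R L}
    {y : L} (hpy : Codisjoint p (R ∙ y)) (hp : ∀ a ∈ p, ∀ b ∈ p, f ⁅a, b⁆ = ⁅f a, f b⁆)
    (hy : ∀ b ∈ p, f ⁅y, b⁆ = ⁅f y, f b⁆) (a b : L) : f ⁅a, b⁆ = ⁅f a, f b⁆ := by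
  have hdecomp : ∀ z : L, ∃ k ∈ p, ∃ t : R, k + t • y = z := fun z => by
    obtain ⟨k, hk, v, hv, rfl⟩ := mem_sup.mp (hpy.eq_top ▸ mem_top : z ∈ p ⊔ R ∙ y)
    obtain ⟨t, rfl⟩ := mem_span_singleton.mp hv
    exact ⟨k, hk, t, rfl⟩
  have hy' : ∀ a ∈ p, f ⁅a, y⁆ = ⁅f a, f y⁆ := fun a ha => by
    rw [← lie_skew, map_neg, hy a ha, lie_skew]
  obtain ⟨k, hk, t, rfl⟩ := hdecomp a
  obtain ⟨k', hk', s, rfl⟩ := hdecomp b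
  simp only [lie_add, add_lie, lie_smul, smul_lie, lie_self, smul_zero, add_zero, map_add,
    map_smul, hp k hk k' hk', hy k' hk', hy' k hk]

end

theorem LieIdeal.exists_lieHom_extend {K L L' : Type*} [Field K] [LieRing L] [LieAlgebra K L]
    [LieRing L'] [LieAlgebra K L'] {I : LieIdeal K L} {y : L} (hy : y ≠ 0)
    (hI : IsCompl (I : Submodule K L) (K ∙ y)) (σ : I →ₗ⁅K⁆ L') (w : L')
    (hσ : ∀ x : I, σ ⁅y, x⁆ = ⁅w, σ x⁆) :
    ∃ f : L →ₗ⁅K⁆ L', (∀ x : I, f x = σ x) ∧ f y = w := by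
  let ψ : (K ∙ y) →ₗ[K] L' :=
    LinearMap.toSpanSingleton K L' w ∘ₗ (LinearEquiv.coord K L y hy).toLinearMap
  let f : L →ₗ[K] L' := LinearMap.ofIsCompl hI (σ : I →ₗ[K] L') ψ
  have hfI : ∀ x : I, f x = σ x := LinearMap.ofIsCompl_apply_left hI
  have hfy : f y = w := by
    refine (LinearMap.ofIsCompl_apply_right hI (φ := (σ : I →ₗ[K] L')) (ψ := ψ)
      ⟨y, mem_span_singleton_self y⟩).trans ?_
    simp [ψ, LinearEquiv.coord_self]
  refine ⟨{ f with map_lie' := f.map_lie_of_codisjoint_span_singleton hI.codisjoint ?_ ?_ _ _ },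
    hfI, hfy⟩
  · intro a ha b hb
    rw [show ⁅a, b⁆ = ((⁅(⟨a, ha⟩ : I), ⟨b, hb⟩⁆ : I) : L) from rfl, hfI, σ.map_lie,
      ← hfI ⟨a, ha⟩, ← hfI ⟨b, hb⟩]
  · intro b hb
    rw [show ⁅y, b⁆ = ((⁅y, (⟨b, hb⟩ : I)⁆ : I) : L) from rfl, hfI, hσ, hfy, ← hfI ⟨b, hb⟩]

/-- If `K₁ ⊆ L₁`, `K₂ ⊆ L₂` are codimension-one Lie ideals, `y₁ ∈ L₁ ∖ K₁`, `y₂ ∈ L₂ ∖ K₂`,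
and there are a Lie algebra isomorphism `σ : K₁ → K₂`, a nonzero scalar `α` and `u ∈ K₂`
with `σ ⁅y₁, x⁆ = α • ⁅y₂, σ x⁆ + ⁅u, σ x⁆` for all `x ∈ K₁`, then `L₁ ≅ L₂`. -/
theorem stmt1 (L₁ : Type) [LieRing L₁] [LieAlgebra ℝ L₁] [FiniteDimensional ℝ L₁]
    (L₂ : Type) [LieRing L₂] [LieAlgebra ℝ L₂] [FiniteDimensional ℝ L₂]
    (K₁ : LieIdeal ℝ L₁) (K₂ : LieIdeal ℝ L₂)
    (hK₁ : Module.finrank ℝ L₁ = Module.finrank ℝ ↥K₁ + 1)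
    (hK₂ : Module.finrank ℝ L₂ = Module.finrank ℝ ↥K₂ + 1)
    (y₁ : L₁) (hy₁ : y₁ ∉ K₁) (y₂ : L₂) (hy₂ : y₂ ∉ K₂)
    (σ : ↥K₁ ≃ₗ⁅ℝ⁆ ↥K₂) (α : ℝ) (hα : α ≠ 0) (u : ↥K₂)
    (hcomp : ∀ x : ↥K₁,
      ((σ ⟨⁅y₁, (x : L₁)⁆, K₁.lie_mem x.2⟩ : ↥K₂) : L₂)
        = α • ⁅y₂, ((σ x : ↥K₂) : L₂)⁆ + ⁅((u : L₂)), ((σ x : ↥K₂) : L₂)⁆) :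
    Nonempty (L₁ ≃ₗ⁅ℝ⁆ L₂) := by
  have hw : α • y₂ + (u : L₂) ∉ K₂ := by
    rwa [add_mem_cancel_right u.2, ← LieSubmodule.mem_toSubmodule, smul_mem_iff _ hα,
      LieSubmodule.mem_toSubmodule]
  obtain ⟨f, hfK, hfy⟩ := LieIdeal.exists_lieHom_extend (ne_of_mem_of_not_mem K₁.zero_mem hy₁).symm
    (isCompl_span_singleton_of_finrank_eq_add_one hK₁ hy₁) (K₂.incl.comp σ.toLieHom) (α • y₂ + u)
    (fun x => by rw [add_lie, smul_lie]; exact hcomp x)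
  have hsurj : Function.Surjective f := by
    rw [← LieHom.coe_toLinearMap, ← LinearMap.range_eq_top, eq_top_iff,
      ← (isCompl_span_singleton_of_finrank_eq_add_one hK₂ hw).codisjoint.eq_top]
    refine sup_le (fun z hz => ⟨σ.symm ⟨z, hz⟩, by simp [hfK]⟩) ?_
    exact (span_singleton_le_iff_mem _ _).mpr ⟨y₁, hfy⟩
  have hrank : finrank ℝ L₁ = finrank ℝ L₂ := by
    rw [hK₁, hK₂, σ.toLinearEquiv.finrank_eq]
  exact ⟨LieEquiv.ofBijective f
    ⟨(LinearMap.injective_iff_surjective_of_finrank_eq_finrank hrank).mpr hsurj, hsurj⟩⟩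
end

section
/- Let L be a finite-dimensional real Lie algebra, K ⊆ L a Lie ideal with dim K = dim L − 1, and y ∈ L ∖ K. Then [L,L] = (ad y)(K) + [K,K] as subspaces of L, and the following are equivalent: (i) [L,L] = K; (ii) K = (ad y)(K) + [K,K]; (iii) the linear endomorphism of the quotient space K/[K,K] induced by the restriction of ad y to K (which is well defined since ad y maps [K,K] into [K,K]) is bijective. -/
/-!
Since `K` has codimension one, `L = K + ℝ y`, and expanding `⁅k₁ + c₁ y, k₂ + c₂ y⁆` shows that
every bracket lies in `(ad y)(K) + [K, K]`. Pulled back into `K`, this subspace is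
`[K, K] + range f`, which is all of `K` exactly when the map induced by `f` on the
finite-dimensional quotient `K / [K, K]` is surjective, i.e. bijective.
-/

open LieAlgebra

namespace LieIdeal

variable {R L : Type*} [CommRing R] [LieRing L] [LieAlgebra R L]

lemma lie_mem_map_ad_sup_lie_of_sup_span_eq_top {K : LieIdeal R L} {y : L}
    (hKy : K.toSubmodule ⊔ Submodule.span R {y} = ⊤) (a b : L) :
    ⁅a, b⁆ ∈ (K.toSubmodule.map (ad R L y) ⊔ (⁅K, K⁆ : LieIdeal R L).toSubmodule) := by
  have hdecomp (x : L) : ∃ k ∈ K, ∃ c : R, k + c • y = x := by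
    obtain ⟨k, hk, z, hz, hx⟩ := Submodule.mem_sup.mp (hKy ▸ Submodule.mem_top : x ∈ _)
    obtain ⟨c, rfl⟩ := Submodule.mem_span_singleton.mp hz
    exact ⟨k, hk, c, hx⟩
  obtain ⟨k₁, hk₁, c₁, rfl⟩ := hdecomp a
  obtain ⟨k₂, hk₂, c₂, rfl⟩ := hdecomp b
  have hexpand : ⁅k₁ + c₁ • y, k₂ + c₂ • y⁆
      = (c₁ • ⁅y, k₂⁆ - c₂ • ⁅y, k₁⁆) + ⁅k₁, k₂⁆ := by
    rw [← lie_skew y k₁]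
    simp only [add_lie, lie_add, lie_smul, smul_lie, lie_self, smul_zero, add_zero, smul_neg]
    abel
  rw [hexpand]
  refine Submodule.add_mem_sup (Submodule.sub_mem _ ?_ ?_) (LieSubmodule.lie_mem_lie hk₁ hk₂)
  · exact Submodule.smul_mem _ _ ⟨k₂, hk₂, rfl⟩
  · exact Submodule.smul_mem _ _ ⟨k₁, hk₁, rfl⟩

lemma derivedSeries_one_eq_map_ad_sup_lie {K : LieIdeal R L} {y : L}
    (hKy : K.toSubmodule ⊔ Submodule.span R {y} = ⊤) :
    (derivedSeries R L 1).toSubmodule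
      = K.toSubmodule.map (ad R L y) ⊔ (⁅K, K⁆ : LieIdeal R L).toSubmodule := by
  refine le_antisymm ?_ (sup_le ?_ ?_)
  · rw [derivedSeries_def, derivedSeriesOfIdeal_succ, derivedSeriesOfIdeal_zero,
      LieSubmodule.lieIdeal_oper_eq_linear_span, Submodule.span_le]
    rintro _ ⟨⟨a, -⟩, ⟨b, -⟩, rfl⟩
    exact lie_mem_map_ad_sup_lie_of_sup_span_eq_top hKy a b
  · rintro _ ⟨k, -, rfl⟩
    exact LieSubmodule.lie_mem_lie (LieSubmodule.mem_top y) (LieSubmodule.mem_top k)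
  · exact LieSubmodule.mono_lie le_top le_top

lemma map_subtype_derivedSeries_one (K : LieIdeal R L) :
    (derivedSeries R K 1).toSubmodule.map K.toSubmodule.subtype
      = (⁅K, K⁆ : LieIdeal R L).toSubmodule := by
  rw [derivedSeries_eq_derivedSeriesOfIdeal_comap, comap_toSubmodule]
  change Submodule.map K.toSubmodule.subtype (Submodule.comap K.toSubmodule.subtype _) = _
  rw [Submodule.map_comap_subtype, derivedSeriesOfIdeal_succ, derivedSeriesOfIdeal_zero,
    inf_eq_right.mpr ((LieSubmodule.toSubmodule_le_toSubmodule _ _).mpr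
      (LieSubmodule.lie_le_left K K))]

end LieIdeal

namespace Submodule

variable {R M : Type*} [Ring R] [AddCommGroup M] [Module R M]

lemma mapQ_surjective_iff_sup_range_eq_top {p : Submodule R M} {f : M →ₗ[R] M}
    (hf : p ≤ p.comap f) :
    Function.Surjective (p.mapQ p f hf) ↔ p ⊔ LinearMap.range f = ⊤ := by
  rw [← LinearMap.range_eq_top, range_mapQ, map_mkQ_eq_top]

lemma sup_eq_top_iff_map_subtype_sup_eq {N : Submodule R M} (p q : Submodule R N) :
    p ⊔ q = ⊤ ↔ p.map N.subtype ⊔ q.map N.subtype = N := by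
  rw [← map_sup, ← (map_injective_of_injective N.injective_subtype).eq_iff, map_subtype_top]

end Submodule

lemma LinearMap.bijective_iff_surjective {K V : Type*} [DivisionRing K] [AddCommGroup V]
    [Module K V] [FiniteDimensional K V] {f : V →ₗ[K] V} :
    Function.Bijective f ↔ Function.Surjective f :=
  ⟨And.right, fun h => ⟨injective_iff_surjective.mpr h, h⟩⟩

/-- For a codimension-one Lie ideal `K` of `L` and `y ∈ L ∖ K`:
`[L,L] = (ad y)(K) + [K,K]`, and the following are equivalent: (i) `[L,L] = K`;
(ii) `K = (ad y)(K) + [K,K]`; (iii) the endomorphism of `K/[K,K]` induced by the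
restriction `f` of `ad y` to `K` is bijective. -/
theorem stmt3 (L : Type) [LieRing L] [LieAlgebra ℝ L] [FiniteDimensional ℝ L]
    (K : LieIdeal ℝ L)
    (hK : Module.finrank ℝ L = Module.finrank ℝ ↥K + 1)
    (y : L) (hy : y ∉ K)
    (f : ↥K →ₗ[ℝ] ↥K) (hf : ∀ x : ↥K, (f x : L) = ⁅y, (x : L)⁆)
    (D : Submodule ℝ ↥K)
    (hD : D = LieSubmodule.toSubmodule (LieAlgebra.derivedSeries ℝ ↥K 1))
    (hmap : D ≤ D.comap f) :
    LieSubmodule.toSubmodule (LieAlgebra.derivedSeries ℝ L 1)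
        = Submodule.map (LieAlgebra.ad ℝ L y) K.toSubmodule
            ⊔ LieSubmodule.toSubmodule (⁅K, K⁆ : LieIdeal ℝ L)
      ∧ List.TFAE
          [ LieAlgebra.derivedSeries ℝ L 1 = K,
            K.toSubmodule = Submodule.map (LieAlgebra.ad ℝ L y) K.toSubmodule
              ⊔ LieSubmodule.toSubmodule (⁅K, K⁆ : LieIdeal ℝ L),
            Function.Bijective (Submodule.mapQ D D f hmap) ] := by
  have hKy : K.toSubmodule ⊔ Submodule.span ℝ {y} = ⊤ :=
    Submodule.eq_top_of_finrank_eq (by rw [Submodule.finrank_sup_span_singleton hy, hK]; rfl)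
  have hderived := LieIdeal.derivedSeries_one_eq_map_ad_sup_lie hKy
  have hrange : (LinearMap.range f).map K.toSubmodule.subtype
      = K.toSubmodule.map (ad ℝ L y) := by
    rw [← LinearMap.range_comp, show K.toSubmodule.subtype ∘ₗ f
      = ad ℝ L y ∘ₗ K.toSubmodule.subtype from LinearMap.ext hf, LinearMap.range_comp,
      Submodule.range_subtype]
  refine ⟨hderived, ?_⟩
  tfae_have 1 ↔ 2 := by
    rw [← LieSubmodule.toSubmodule_inj, hderived, eq_comm]
  tfae_have 2 ↔ 3 := by
    rw [LinearMap.bijective_iff_surjective, Submodule.mapQ_surjective_iff_sup_range_eq_top,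
      Submodule.sup_eq_top_iff_map_subtype_sup_eq, hD, LieIdeal.map_subtype_derivedSeries_one,
      hrange, sup_comm, eq_comm]
  tfae_finish
end

section
/- Let n ≥ 1 and let L be a solvable real Lie algebra with dim L = n + 1 and dim [L,L] = n. Then L is indecomposable, i.e. L is not isomorphic to a direct product of two nonzero Lie algebras. -/
/-- Componentwise Lie bracket on a binary product. -/
instance prodBracket {L₁ L₂ : Type*} [LieRing L₁] [LieRing L₂] :
    Bracket (L₁ × L₂) (L₁ × L₂) :=
  ⟨fun x y => (⁅x.1, y.1⁆, ⁅x.2, y.2⁆)⟩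

/-- The direct product of two Lie rings. -/
instance prodLieRing {L₁ L₂ : Type*} [LieRing L₁] [LieRing L₂] : LieRing (L₁ × L₂) where
  add_lie x y z := Prod.ext (add_lie x.1 y.1 z.1) (add_lie x.2 y.2 z.2)
  lie_add x y z := Prod.ext (lie_add x.1 y.1 z.1) (lie_add x.2 y.2 z.2)
  lie_self x := Prod.ext (lie_self x.1) (lie_self x.2)
  leibniz_lie x y z := Prod.ext (leibniz_lie x.1 y.1 z.1) (leibniz_lie x.2 y.2 z.2)

/-- The direct product of two Lie algebras. -/
instance prodLieAlgebra {R : Type*} [CommRing R] {L₁ L₂ : Type*} [LieRing L₁] [LieRing L₂]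
    [LieAlgebra R L₁] [LieAlgebra R L₂] : LieAlgebra R (L₁ × L₂) where
  lie_smul t x y := Prod.ext (lie_smul t x.1 y.1) (lie_smul t x.2 y.2)

/-- A real Lie algebra is decomposable if it is isomorphic to the direct product of two
nonzero Lie algebras, and indecomposable otherwise. -/
def Decomposable (L : Type) [LieRing L] [LieAlgebra ℝ L] : Prop :=
  ∃ (L₁ L₂ : Type) (_ : LieRing L₁) (_ : LieAlgebra ℝ L₁) (_ : LieRing L₂) (_ : LieAlgebra ℝ L₂),
    Nontrivial L₁ ∧ Nontrivial L₂ ∧ Nonempty (L ≃ₗ⁅ℝ⁆ (L₁ × L₂))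

/-! A solvable Lie algebra `L ≠ 0` has `[L, L] ≠ L`, so its derived algebra has codimension at
least one. The derived algebra of `L₁ × L₂` lies in `[L₁, L₁] × [L₂, L₂]`, so a product of two
nonzero solvable Lie algebras has a derived algebra of codimension at least two. -/

open LieAlgebra Module

section Product

variable {R L₁ L₂ : Type*} [CommRing R] [LieRing L₁] [LieAlgebra R L₁] [LieRing L₂]
  [LieAlgebra R L₂]

theorem LieAlgebra.isSolvable_fst_of_prod [IsSolvable (L₁ × L₂)] : IsSolvable L₁ :=
  (LieHom.fst_surjective (R := ℤ) (L₁ := L₁) (L₂ := L₂)).lieAlgebra_isSolvable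

theorem LieAlgebra.isSolvable_snd_of_prod [IsSolvable (L₁ × L₂)] : IsSolvable L₂ :=
  (LieHom.snd_surjective (R := ℤ) (L₁ := L₁) (L₂ := L₂)).lieAlgebra_isSolvable

theorem LieAlgebra.derivedSeries_prod_le (k : ℕ) :
    (derivedSeries R (L₁ × L₂) k : Submodule R (L₁ × L₂)) ≤
      (derivedSeries R L₁ k : Submodule R L₁).prod (derivedSeries R L₂ k) := by
  intro x hx
  exact ⟨LieIdeal.derivedSeries_map_le (f := LieHom.fst R L₁ L₂) k (LieIdeal.mem_map hx),
    LieIdeal.derivedSeries_map_le (f := LieHom.snd R L₁ L₂) k (LieIdeal.mem_map hx)⟩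

theorem LieEquiv.finrank_derivedSeries_eq {L L' : Type*} [LieRing L] [LieAlgebra R L]
    [LieRing L'] [LieAlgebra R L'] (e : L ≃ₗ⁅R⁆ L') (k : ℕ) :
    finrank R (derivedSeries R L k) = finrank R (derivedSeries R L' k) := by
  rw [← LieIdeal.derivedSeries_map_eq k e.surjective]
  change _ = finrank R (LieSubmodule.toSubmodule (LieIdeal.map e.toLieHom (derivedSeries R L k)))
  rw [LieIdeal.coe_map_of_surjective e.surjective]
  exact (LinearEquiv.finrank_map_eq e.toLinearEquiv _).symm

end Product

section Field

variable {K : Type*} [Field K]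

theorem LieAlgebra.finrank_derivedSeries_one_lt {L : Type*} [LieRing L] [LieAlgebra K L]
    [FiniteDimensional K L] [IsSolvable L] [Nontrivial L] :
    finrank K (derivedSeries K L 1) < finrank K L := by
  apply Submodule.finrank_lt (s := LieSubmodule.toSubmodule (derivedSeries K L 1))
  rw [Ne, ← LieSubmodule.top_toSubmodule (R := K) (L := L) (M := L), LieSubmodule.toSubmodule_inj]
  exact (derivedSeries_lt_top_of_solvable (R := K) (L := L)).ne

theorem LieAlgebra.finrank_derivedSeries_prod_le {L₁ L₂ : Type*} [LieRing L₁] [LieAlgebra K L₁]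
    [LieRing L₂] [LieAlgebra K L₂] [FiniteDimensional K L₁] [FiniteDimensional K L₂] (k : ℕ) :
    finrank K (derivedSeries K (L₁ × L₂) k) ≤
      finrank K (derivedSeries K L₁ k) + finrank K (derivedSeries K L₂ k) := by
  set D₁ : Submodule K L₁ := (derivedSeries K L₁ k : Submodule K L₁)
  set D₂ : Submodule K L₂ := (derivedSeries K L₂ k : Submodule K L₂)
  calc finrank K (derivedSeries K (L₁ × L₂) k)
      ≤ finrank K (D₁.prod D₂) := Submodule.finrank_mono (derivedSeries_prod_le k)
    _ = finrank K (D₁.map (LinearMap.inl K L₁ L₂) ⊔ D₂.map (LinearMap.inr K L₁ L₂) :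
          Submodule K (L₁ × L₂)) := by
        rw [LinearMap.prod_eq_sup_map]
    _ ≤ finrank K (D₁.map (LinearMap.inl K L₁ L₂)) + finrank K (D₂.map (LinearMap.inr K L₁ L₂)) :=
        Submodule.finrank_add_le_finrank_add_finrank _ _
    _ ≤ finrank K D₁ + finrank K D₂ :=
        add_le_add (Submodule.finrank_map_le _ _) (Submodule.finrank_map_le _ _)

theorem LieAlgebra.finrank_derivedSeries_one_prod_add_two_le {L₁ L₂ : Type*} [LieRing L₁]
    [LieAlgebra K L₁] [LieRing L₂] [LieAlgebra K L₂] [FiniteDimensional K L₁]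
    [FiniteDimensional K L₂] [Nontrivial L₁] [Nontrivial L₂] [IsSolvable (L₁ × L₂)] :
    finrank K (derivedSeries K (L₁ × L₂) 1) + 2 ≤ finrank K (L₁ × L₂) := by
  have := isSolvable_fst_of_prod (L₁ := L₁) (L₂ := L₂)
  have := isSolvable_snd_of_prod (L₁ := L₁) (L₂ := L₂)
  have h₁ := finrank_derivedSeries_one_lt (K := K) (L := L₁)
  have h₂ := finrank_derivedSeries_one_lt (K := K) (L := L₂)
  have hprod := finrank_derivedSeries_prod_le (K := K) (L₁ := L₁) (L₂ := L₂) 1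
  rw [finrank_prod]
  omega

end Field

theorem stmt4_general (n : ℕ) (L : Type) [LieRing L] [LieAlgebra ℝ L]
    [FiniteDimensional ℝ L] [LieAlgebra.IsSolvable L]
    (hdim : Module.finrank ℝ L = n + 1)
    (hder : Module.finrank ℝ ↥(LieAlgebra.derivedSeries ℝ L 1) = n) :
    ¬ Decomposable L := by
  rintro ⟨L₁, L₂, _, _, _, _, _, _, ⟨e⟩⟩
  have : FiniteDimensional ℝ (L₁ × L₂) := e.toLinearEquiv.finiteDimensional
  have : FiniteDimensional ℝ L₁ :=
    Module.Finite.of_surjective (LinearMap.fst ℝ L₁ L₂) Prod.fst_surjective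
  have : FiniteDimensional ℝ L₂ :=
    Module.Finite.of_surjective (LinearMap.snd ℝ L₁ L₂) Prod.snd_surjective
  have : IsSolvable (L₁ × L₂) := (solvable_iff_equiv_solvable e).mp inferInstance
  have hcodim := finrank_derivedSeries_one_prod_add_two_le (K := ℝ) (L₁ := L₁) (L₂ := L₂)
  rw [← e.finrank_derivedSeries_eq, ← e.toLinearEquiv.finrank_eq, hdim, hder] at hcodim
  omega

/-- A solvable real Lie algebra of dimension `n + 1` (`n ≥ 1`) whose derived algebra has
dimension `n` is indecomposable. -/
theorem stmt4 (n : ℕ) (hn : 1 ≤ n) (L : Type) [LieRing L] [LieAlgebra ℝ L]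
    [FiniteDimensional ℝ L] [LieAlgebra.IsSolvable L]
    (hdim : Module.finrank ℝ L = n + 1)
    (hder : Module.finrank ℝ ↥(LieAlgebra.derivedSeries ℝ L 1) = n) :
    ¬ Decomposable L :=
  stmt4_general n L hdim hder
end

section
/- Let L1 and L2 be finite-dimensional solvable real Lie algebras such that, for i = 1, 2, the derived algebra Ki := [Li, Li] satisfies dim Ki = dim Li − 1, and fix yi ∈ Li ∖ Ki. Then L1 and L2 are isomorphic as Lie algebras if and only if there exist a Lie algebra isomorphism σ : K1 → K2, a scalar α ∈ ℝ ∖ {0}, and an element u ∈ K2 such that σ([y1, x]) = α·[y2, σ(x)] + [u, σ(x)] for all x ∈ K1. -/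
/-!
An isomorphism `φ : L₁ ≃ L₂` carries the derived algebra `K₁` onto `K₂`, and since `K₂` has
codimension one we may write `φ y₁ = α • y₂ + u` with `α ≠ 0` and `u ∈ K₂`; then `σ := φ|K₁`
intertwines `ad y₁` with `ad (φ y₁) = α • ad y₂ + ad u`. Conversely, given such `σ, α, u`, the
element `w := α • y₂ + u` also spans a complement of `K₂`, and the linear map
`k + t • y₁ ↦ σ k + t • w` is a Lie algebra isomorphism: a linear map defined on `K ⊕ R ∙ y`
preserves brackets as soon as it does so on `K` and on pairs `(y, k)`.
-/

open Module LieAlgebra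

theorem Submodule.sup_span_singleton_eq_top_of_finrank_eq_succ {R V : Type*} [DivisionRing R]
    [AddCommGroup V] [Module R V] {p : Submodule R V} (h : finrank R V = finrank R p + 1)
    {x : V} (hx : x ∉ p) : p ⊔ (R ∙ x) = ⊤ := by
  have : FiniteDimensional R V := Module.finite_of_finrank_eq_succ h
  have hx0 : x ≠ 0 := fun h0 => hx (h0 ▸ p.zero_mem)
  refine eq_top_of_finrank_eq ?_
  have := finrank_sup_add_finrank_inf_eq p (R ∙ x)
  rw [(disjoint_span_singleton_of_notMem hx).eq_bot, finrank_bot,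
    finrank_span_singleton hx0] at this
  omega

theorem Submodule.exists_add_smul_of_sup_span_singleton_eq_top {R M : Type*} [Semiring R]
    [AddCommMonoid M] [Module R M] {p : Submodule R M} {y : M} (hp : p ⊔ (R ∙ y) = ⊤) (a : M) :
    ∃ k ∈ p, ∃ s : R, a = k + s • y := by
  obtain ⟨k, hk, z, hz, rfl⟩ := Submodule.mem_sup.mp (hp ▸ Submodule.mem_top : a ∈ p ⊔ (R ∙ y))
  obtain ⟨s, rfl⟩ := Submodule.mem_span_singleton.mp hz
  exact ⟨k, hk, s, rfl⟩

theorem LinearEquiv.exists_extend_of_sup_span_singleton_eq_top {R M₁ M₂ : Type*} [DivisionRing R]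
    [AddCommGroup M₁] [Module R M₁] [AddCommGroup M₂] [Module R M₂]
    {p₁ : Submodule R M₁} {p₂ : Submodule R M₂} {y₁ : M₁} {y₂ : M₂}
    (hy₁ : y₁ ∉ p₁) (hp₁ : p₁ ⊔ (R ∙ y₁) = ⊤) (hy₂ : y₂ ∉ p₂) (hp₂ : p₂ ⊔ (R ∙ y₂) = ⊤)
    (σ : p₁ ≃ₗ[R] p₂) : ∃ e : M₁ ≃ₗ[R] M₂, (∀ x : p₁, e x = σ x) ∧ e y₁ = y₂ := by
  have h₁ : IsCompl p₁ (R ∙ y₁) :=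
    ⟨Submodule.disjoint_span_singleton_of_notMem hy₁, codisjoint_iff.mpr hp₁⟩
  have h₂ : IsCompl p₂ (R ∙ y₂) :=
    ⟨Submodule.disjoint_span_singleton_of_notMem hy₂, codisjoint_iff.mpr hp₂⟩
  have hy₁0 : y₁ ≠ 0 := fun h => hy₁ (h ▸ p₁.zero_mem)
  have hy₂0 : y₂ ≠ 0 := fun h => hy₂ (h ▸ p₂.zero_mem)
  let τ : (R ∙ y₁) ≃ₗ[R] (R ∙ y₂) :=
    LinearEquiv.coord R M₁ y₁ hy₁0 ≪≫ₗ LinearEquiv.toSpanNonzeroSingleton R M₂ y₂ hy₂0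
  refine ⟨(Submodule.prodEquivOfIsCompl _ _ h₁).symm ≪≫ₗ σ.prodCongr τ ≪≫ₗ
    Submodule.prodEquivOfIsCompl _ _ h₂, fun x => ?_, ?_⟩
  · simp
  · have := Submodule.prodEquivOfIsCompl_symm_apply_right _ _ h₁
      ⟨y₁, Submodule.mem_span_singleton_self y₁⟩
    simp only [LinearEquiv.trans_apply] at this ⊢
    simp [this, τ, LinearEquiv.coord_self]

section Lie

variable {R L₁ L₂ : Type*} [CommRing R] [LieRing L₁] [LieAlgebra R L₁] [LieRing L₂]
  [LieAlgebra R L₂]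

theorem LinearMap.map_lie_of_sup_span_singleton_eq_top (f : L₁ →ₗ[R] L₂) {p : Submodule R L₁}
    {y : L₁} (hp : p ⊔ (R ∙ y) = ⊤) (hf : ∀ a ∈ p, ∀ b ∈ p, f ⁅a, b⁆ = ⁅f a, f b⁆)
    (hfy : ∀ a ∈ p, f ⁅y, a⁆ = ⁅f y, f a⁆) (a b : L₁) : f ⁅a, b⁆ = ⁅f a, f b⁆ := by
  obtain ⟨k, hk, s, rfl⟩ := Submodule.exists_add_smul_of_sup_span_singleton_eq_top hp a
  obtain ⟨l, hl, t, rfl⟩ := Submodule.exists_add_smul_of_sup_span_singleton_eq_top hp b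
  have hfy' : f ⁅k, y⁆ = ⁅f k, f y⁆ := by
    rw [← lie_skew, map_neg, hfy k hk, lie_skew]
  simp only [add_lie, lie_add, smul_lie, lie_smul, lie_self, smul_zero, add_zero, map_add,
    map_smul, hf k hk l hl, hfy l hl, hfy']

theorem LieEquiv.apply_mem_derivedSeries (e : L₁ ≃ₗ⁅R⁆ L₂) (k : ℕ) {x : L₁}
    (hx : x ∈ derivedSeries R L₁ k) : e x ∈ derivedSeries R L₂ k :=
  LieIdeal.derivedSeries_map_eq k e.surjective ▸ LieIdeal.mem_map hx

theorem LieEquiv.apply_mem_derivedSeries_iff (e : L₁ ≃ₗ⁅R⁆ L₂) (k : ℕ) {x : L₁} :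
    e x ∈ derivedSeries R L₂ k ↔ x ∈ derivedSeries R L₁ k :=
  ⟨fun h => by simpa using e.symm.apply_mem_derivedSeries k h, e.apply_mem_derivedSeries k⟩

def LieEquiv.restrictDerivedSeries (e : L₁ ≃ₗ⁅R⁆ L₂) (k : ℕ) :
    derivedSeries R L₁ k ≃ₗ⁅R⁆ derivedSeries R L₂ k where
  toFun x := ⟨e x, e.apply_mem_derivedSeries k x.2⟩
  invFun y := ⟨e.symm y, e.symm.apply_mem_derivedSeries k y.2⟩
  map_add' x y := by ext; simp
  map_smul' t x := by ext; simp
  map_lie' {x y} := by ext; simpa using e.map_lie x y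
  left_inv x := by ext; simp
  right_inv y := by ext; simp

@[simp]
theorem LieEquiv.coe_restrictDerivedSeries_apply (e : L₁ ≃ₗ⁅R⁆ L₂) (k : ℕ)
    (x : derivedSeries R L₁ k) : (e.restrictDerivedSeries k x : L₂) = e x :=
  rfl

end Lie

theorem LieIdeal.nonempty_lieEquiv_of_sup_span_singleton_eq_top {R L₁ L₂ : Type*} [Field R]
    [LieRing L₁] [LieAlgebra R L₁] [LieRing L₂] [LieAlgebra R L₂]
    {K₁ : LieIdeal R L₁} {K₂ : LieIdeal R L₂} {y₁ : L₁} {y₂ : L₂}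
    (hy₁ : y₁ ∉ K₁) (hK₁ : K₁.toSubmodule ⊔ (R ∙ y₁) = ⊤)
    (hy₂ : y₂ ∉ K₂) (hK₂ : K₂.toSubmodule ⊔ (R ∙ y₂) = ⊤) (σ : K₁ ≃ₗ⁅R⁆ K₂)
    (hσ : ∀ x : K₁, (σ ⟨⁅y₁, (x : L₁)⁆, K₁.lie_mem x.2⟩ : L₂) = ⁅y₂, (σ x : L₂)⁆) :
    Nonempty (L₁ ≃ₗ⁅R⁆ L₂) := by
  obtain ⟨e, he, hey⟩ :=
    LinearEquiv.exists_extend_of_sup_span_singleton_eq_top hy₁ hK₁ hy₂ hK₂ σ.toLinearEquiv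
  have hK : ∀ a ∈ K₁, ∀ b ∈ K₁, e ⁅a, b⁆ = ⁅e a, e b⁆ := fun a ha b hb => by
    rw [he ⟨⁅a, b⁆, K₁.lie_mem hb⟩, he ⟨a, ha⟩, he ⟨b, hb⟩]
    exact congrArg Subtype.val (σ.map_lie ⟨a, ha⟩ ⟨b, hb⟩)
  have hy : ∀ a ∈ K₁, e ⁅y₁, a⁆ = ⁅e y₁, e a⁆ := fun a ha => by
    rw [he ⟨⁅y₁, a⁆, K₁.lie_mem ha⟩, hey, he ⟨a, ha⟩]
    exact hσ ⟨a, ha⟩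
  exact ⟨{ e with map_lie' :=
    e.toLinearMap.map_lie_of_sup_span_singleton_eq_top hK₁ hK hy _ _ }⟩

theorem stmt6_general (L₁ : Type) [LieRing L₁] [LieAlgebra ℝ L₁]
    (L₂ : Type) [LieRing L₂] [LieAlgebra ℝ L₂]
    (K₁ : LieIdeal ℝ L₁) (hK₁def : K₁ = LieAlgebra.derivedSeries ℝ L₁ 1)
    (K₂ : LieIdeal ℝ L₂) (hK₂def : K₂ = LieAlgebra.derivedSeries ℝ L₂ 1)
    (hK₁ : Module.finrank ℝ L₁ = Module.finrank ℝ ↥K₁ + 1)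
    (hK₂ : Module.finrank ℝ L₂ = Module.finrank ℝ ↥K₂ + 1)
    (y₁ : L₁) (hy₁ : y₁ ∉ K₁) (y₂ : L₂) (hy₂ : y₂ ∉ K₂) :
    Nonempty (L₁ ≃ₗ⁅ℝ⁆ L₂) ↔
      ∃ (σ : ↥K₁ ≃ₗ⁅ℝ⁆ ↥K₂) (α : ℝ) (u : ↥K₂), α ≠ 0 ∧
        ∀ x : ↥K₁,
          ((σ ⟨⁅y₁, (x : L₁)⁆, K₁.lie_mem x.2⟩ : ↥K₂) : L₂)
            = α • ⁅y₂, ((σ x : ↥K₂) : L₂)⁆ + ⁅((u : L₂)), ((σ x : ↥K₂) : L₂)⁆ := by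
  have hK₁top := Submodule.sup_span_singleton_eq_top_of_finrank_eq_succ hK₁ hy₁
  have hK₂top := Submodule.sup_span_singleton_eq_top_of_finrank_eq_succ hK₂ hy₂
  subst hK₁def hK₂def
  constructor
  · rintro ⟨φ⟩
    obtain ⟨u, hu, α, hφy⟩ :=
      Submodule.exists_add_smul_of_sup_span_singleton_eq_top hK₂top (φ y₁)
    have hα : α ≠ 0 := by
      rintro rfl
      exact hy₁ ((φ.apply_mem_derivedSeries_iff 1).mp (by simpa [hφy] using hu))
    refine ⟨φ.restrictDerivedSeries 1, α, ⟨u, hu⟩, hα, fun x => ?_⟩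
    rw [φ.coe_restrictDerivedSeries_apply, φ.coe_restrictDerivedSeries_apply,
      φ.map_lie, hφy, add_lie, smul_lie, add_comm]
  · rintro ⟨σ, α, u, hα, hσ⟩
    have hw : α • y₂ + (u : L₂) ∉ derivedSeries ℝ L₂ 1 := by
      rwa [← LieSubmodule.mem_toSubmodule, Submodule.add_mem_iff_left _ u.2,
        Submodule.smul_mem_iff _ hα]
    exact LieIdeal.nonempty_lieEquiv_of_sup_span_singleton_eq_top hy₁ hK₁top hw
      (Submodule.sup_span_singleton_eq_top_of_finrank_eq_succ hK₂ hw) σ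
      (fun x => by rw [hσ x, add_lie, smul_lie])

/-- Let `L₁, L₂` be finite-dimensional solvable real Lie algebras whose derived algebras
`K₁, K₂` have codimension one, and fix `y₁ ∈ L₁ ∖ K₁`, `y₂ ∈ L₂ ∖ K₂`. Then `L₁ ≅ L₂`
iff there are a Lie algebra isomorphism `σ : K₁ → K₂`, a nonzero scalar `α` and `u ∈ K₂`
with `σ ⁅y₁, x⁆ = α • ⁅y₂, σ x⁆ + ⁅u, σ x⁆` for all `x ∈ K₁`. -/
theorem stmt6 (L₁ : Type) [LieRing L₁] [LieAlgebra ℝ L₁] [FiniteDimensional ℝ L₁]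
    [LieAlgebra.IsSolvable L₁]
    (L₂ : Type) [LieRing L₂] [LieAlgebra ℝ L₂] [FiniteDimensional ℝ L₂]
    [LieAlgebra.IsSolvable L₂]
    (K₁ : LieIdeal ℝ L₁) (hK₁def : K₁ = LieAlgebra.derivedSeries ℝ L₁ 1)
    (K₂ : LieIdeal ℝ L₂) (hK₂def : K₂ = LieAlgebra.derivedSeries ℝ L₂ 1)
    (hK₁ : Module.finrank ℝ L₁ = Module.finrank ℝ ↥K₁ + 1)
    (hK₂ : Module.finrank ℝ L₂ = Module.finrank ℝ ↥K₂ + 1)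
    (y₁ : L₁) (hy₁ : y₁ ∉ K₁) (y₂ : L₂) (hy₂ : y₂ ∉ K₂) :
    Nonempty (L₁ ≃ₗ⁅ℝ⁆ L₂) ↔
      ∃ (σ : ↥K₁ ≃ₗ⁅ℝ⁆ ↥K₂) (α : ℝ) (u : ↥K₂), α ≠ 0 ∧
        ∀ x : ↥K₁,
          ((σ ⟨⁅y₁, (x : L₁)⁆, K₁.lie_mem x.2⟩ : ↥K₂) : L₂)
            = α • ⁅y₂, ((σ x : ↥K₂) : L₂)⁆ + ⁅((u : L₂)), ((σ x : ↥K₂) : L₂)⁆ :=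
  stmt6_general L₁ L₂ K₁ hK₁def K₂ hK₂def hK₁ hK₂ y₁ hy₁ y₂ hy₂
end

section
/- Let L be a finite-dimensional real Lie algebra, H ⊆ L a nonzero solvable Lie ideal with dim H = dim L − 2, and z, y ∈ L such that L = ℝz ⊕ ℝy ⊕ H as an internal direct sum of vector subspaces and [z, y] ∈ H. Set K := ℝy ⊕ H. If there exist u ∈ K with [z, w] = [u, w] for all w ∈ K and v ∈ H with [y, x] = [v, x] for all x ∈ H, then [L,L] ≠ H. -/
/-!
Put `J := ⁅H, H⁆`. The hypotheses say that `ad y` agrees on `H` with `ad v` for some `v ∈ H`, and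
`ad z` agrees on `K = ℝy ⊕ H` with `ad u` for some `u ∈ K`. Hence all brackets of `K` lie in `J`,
then so do all brackets of `L = ℝz ⊕ K`, i.e. `[L, L] ≤ J ≤ H`. So `[L, L] = H` would make `H`
perfect, and a perfect solvable ideal is zero.
-/

open LieAlgebra

section

variable {R L : Type*} [CommRing R] [LieRing L] [LieAlgebra R L]

theorem LieIdeal.eq_bot_of_isSolvable_of_lie_self_eq
    (I : LieIdeal R L) [IsSolvable I] (h : ⁅I, I⁆ = I) : I = ⊥ := by
  by_contra hI
  have : Nontrivial I := (LieSubmodule.nontrivial_iff_ne_bot R L L).mpr hI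
  refine (derivedSeries_lt_top_of_solvable R I).ne ?_
  rw [LieIdeal.derivedSeries_eq_derivedSeriesOfIdeal_comap, derivedSeriesOfIdeal_succ,
    derivedSeriesOfIdeal_zero, h, LieIdeal.comap_incl_self]

theorem lie_mem_of_mem_span_singleton_sup {x : L} {B J : Submodule R L} (hxB : ∀ b ∈ B, ⁅x, b⁆ ∈ J)
    (hB : ∀ b ∈ B, ∀ b' ∈ B, ⁅b, b'⁆ ∈ J) :
    ∀ a ∈ Submodule.span R {x} ⊔ B, ∀ a' ∈ Submodule.span R {x} ⊔ B, ⁅a, a'⁆ ∈ J := by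
  intro a ha a' ha'
  obtain ⟨_, hc, b, hb, rfl⟩ := Submodule.mem_sup.mp ha
  obtain ⟨_, hc', b', hb', rfl⟩ := Submodule.mem_sup.mp ha'
  obtain ⟨c, rfl⟩ := Submodule.mem_span_singleton.mp hc
  obtain ⟨c', rfl⟩ := Submodule.mem_span_singleton.mp hc'
  have hbx : ⁅b, x⁆ ∈ J := by rw [← lie_skew]; exact J.neg_mem (hxB b hb)
  simp only [add_lie, lie_add, smul_lie, lie_smul, lie_self, smul_zero, zero_add]
  exact J.add_mem (J.smul_mem _ hbx) (J.add_mem (J.smul_mem _ (hxB b' hb')) (hB b hb b' hb'))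

end

theorem stmt8_general (L : Type) [LieRing L] [LieAlgebra ℝ L]
    (H : LieIdeal ℝ L) (hHne : H ≠ ⊥) [LieAlgebra.IsSolvable ↥H]
    (z y : L)
    (hsup : Submodule.span ℝ {z} ⊔ Submodule.span ℝ {y} ⊔ H.toSubmodule = ⊤)
    (u : L) (hu : u ∈ Submodule.span ℝ {y} ⊔ H.toSubmodule)
    (huw : ∀ w ∈ Submodule.span ℝ {y} ⊔ H.toSubmodule, ⁅z, w⁆ = ⁅u, w⁆)
    (v : L) (hv : v ∈ H) (hvx : ∀ x ∈ H, ⁅y, x⁆ = ⁅v, x⁆) :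
    LieAlgebra.derivedSeries ℝ L 1 ≠ H := by
  intro heq
  let J : LieIdeal ℝ L := ⁅H, H⁆
  have hyH : ∀ x ∈ H.toSubmodule, ⁅y, x⁆ ∈ J.toSubmodule := fun x hx =>
    hvx x hx ▸ LieSubmodule.lie_mem_lie hv hx
  have hK := lie_mem_of_mem_span_singleton_sup hyH fun _ hb _ hb' => LieSubmodule.lie_mem_lie hb hb'
  have hL := lie_mem_of_mem_span_singleton_sup (fun w hw => huw w hw ▸ hK u hu w hw) hK
  rw [← sup_assoc, hsup] at hL
  have hle : derivedSeries ℝ L 1 ≤ J := by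
    rw [derivedSeries_def, derivedSeriesOfIdeal_succ, derivedSeriesOfIdeal_zero,
      LieSubmodule.lie_le_iff]
    exact fun a _ b _ => hL a trivial b trivial
  exact hHne (H.eq_bot_of_isSolvable_of_lie_self_eq
    (le_antisymm (LieSubmodule.lie_le_right H H) (heq.symm.le.trans hle)))

/-- Let `H` be a nonzero solvable codimension-two Lie ideal of `L` and `z, y ∈ L` with
`L = ℝz ⊕ ℝy ⊕ H` (internal direct sum of subspaces) and `⁅z, y⁆ ∈ H`; set `K := ℝy ⊕ H`.
If there are `u ∈ K` with `⁅z, w⁆ = ⁅u, w⁆` for all `w ∈ K` and `v ∈ H` with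
`⁅y, x⁆ = ⁅v, x⁆` for all `x ∈ H`, then `[L,L] ≠ H`. -/
theorem stmt8 (L : Type) [LieRing L] [LieAlgebra ℝ L] [FiniteDimensional ℝ L]
    (H : LieIdeal ℝ L) (hHne : H ≠ ⊥) [LieAlgebra.IsSolvable ↥H]
    (hHdim : Module.finrank ℝ L = Module.finrank ℝ ↥H + 2)
    (z y : L)
    (hsup : Submodule.span ℝ {z} ⊔ Submodule.span ℝ {y} ⊔ H.toSubmodule = ⊤)
    (hzind : Submodule.span ℝ {z} ⊓ (Submodule.span ℝ {y} ⊔ H.toSubmodule) = ⊥)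
    (hyind : Submodule.span ℝ {y} ⊓ H.toSubmodule = ⊥)
    (hzy : ⁅z, y⁆ ∈ H)
    (u : L) (hu : u ∈ Submodule.span ℝ {y} ⊔ H.toSubmodule)
    (huw : ∀ w ∈ Submodule.span ℝ {y} ⊔ H.toSubmodule, ⁅z, w⁆ = ⁅u, w⁆)
    (v : L) (hv : v ∈ H) (hvx : ∀ x ∈ H, ⁅y, x⁆ = ⁅v, x⁆) :
    LieAlgebra.derivedSeries ℝ L 1 ≠ H :=
  stmt8_general L H hHne z y hsup u hu huw v hv hvx
end

section
/- Let n ≥ 1 and let L1, L2 be real Lie algebras such that, for i = 1, 2, the derived algebra Hi := [Li, Li] is abelian of dimension n, there are elements zi, yi ∈ Li with Li = ℝzi ⊕ ℝyi ⊕ Hi as vector spaces, [zi, yi] = 0, and the restrictions to Hi of ad zi and ad yi are linearly independent endomorphisms of Hi. Then L1 and L2 are isomorphic as Lie algebras if and only if there exist a linear isomorphism σ : H1 → H2 and scalars α, β, γ, δ ∈ ℝ with αδ − βγ ≠ 0 such that σ([z1, x]) = γ·[z2, σ(x)] + α·[y2, σ(x)] and σ([y1, x]) = δ·[z2, σ(x)]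 + β·[y2, σ(x)] for all x ∈ H1. -/
/-!
An isomorphism `e : L₁ ≃ L₂` carries the derived algebra `H₁` onto `H₂`. Writing
`e z₁ ≡ γ z₂ + α y₂` and `e y₁ ≡ δ z₂ + β y₂` modulo the abelian ideal `H₂`, the restriction
`σ = e|H₁` turns `ad z₁, ad y₁` into `γ ad z₂ + α ad y₂, δ ad z₂ + β ad y₂`, and the matrix is
invertible because `e` induces an isomorphism `L₁/H₁ ≅ L₂/H₂`. Conversely, since `zᵢ, yᵢ` commute
and `Hᵢ` is abelian, every bracket in `Lᵢ = K zᵢ ⊕ K yᵢ ⊕ Hᵢ` is determined by the action of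
`zᵢ, yᵢ` on `Hᵢ`; so `z₁ ↦ γ z₂ + α y₂`, `y₁ ↦ δ z₂ + β y₂`, `x ↦ σ x` is a Lie isomorphism.
-/

open Submodule

section Decomposition

variable {K L : Type*} [Field K] [AddCommGroup L] [Module K L]

noncomputable def decomposition (z y : L) (H : Submodule K L) : (Fin 2 → K) × H →ₗ[K] L :=
  (Fintype.linearCombination K ![z, y]).coprod H.subtype

variable {z y : L} {H : Submodule K L}

@[simp]
theorem decomposition_apply (c : Fin 2 → K) (h : H) :
    decomposition z y H (c, h) = c 0 • z + c 1 • y + h := by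
  simp [decomposition, Fintype.linearCombination_apply, Fin.sum_univ_two]

theorem decomposition_injective (hz : z ≠ 0) (hy : y ≠ 0)
    (hzind : span K {z} ⊓ (span K {y} ⊔ H) = ⊥) (hyind : span K {y} ⊓ H = ⊥) :
    Function.Injective (decomposition z y H) := by
  refine (injective_iff_map_eq_zero _).2 fun ⟨c, h⟩ hch => ?_
  rw [decomposition_apply, add_assoc] at hch
  have hcz : c 0 • z ∈ span K {z} ⊓ (span K {y} ⊔ H) := by
    refine ⟨smul_mem _ _ (mem_span_singleton_self z), ?_⟩
    rw [eq_neg_of_add_eq_zero_left hch]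
    exact neg_mem (add_mem (mem_sup_left (smul_mem _ _ (mem_span_singleton_self y)))
      (mem_sup_right h.2))
  rw [hzind, mem_bot] at hcz
  rw [hcz, zero_add] at hch
  have hcy : c 1 • y ∈ span K {y} ⊓ H := by
    refine ⟨smul_mem _ _ (mem_span_singleton_self y), ?_⟩
    rw [eq_neg_of_add_eq_zero_left hch]
    exact neg_mem h.2
  rw [hyind, mem_bot] at hcy
  rw [hcy, zero_add] at hch
  have hc : c = 0 := by
    ext i
    fin_cases i
    · exact (smul_eq_zero.1 hcz).resolve_right hz
    · exact (smul_eq_zero.1 hcy).resolve_right hy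
  simpa [hc] using hch

theorem decomposition_surjective (hsup : span K {z} ⊔ span K {y} ⊔ H = ⊤) :
    Function.Surjective (decomposition z y H) := by
  intro v
  obtain ⟨_, hzy, h, hh, rfl⟩ := mem_sup.1 (hsup ▸ mem_top : v ∈ span K {z} ⊔ span K {y} ⊔ H)
  obtain ⟨_, hz, _, hy, rfl⟩ := mem_sup.1 hzy
  obtain ⟨s, rfl⟩ := mem_span_singleton.1 hz
  obtain ⟨t, rfl⟩ := mem_span_singleton.1 hy
  exact ⟨(![s, t], ⟨h, hh⟩), by simp⟩

/-- `c 1 * d 0 - d 1 * c 0` is, up to sign, the determinant of the map `L/H₁ → L₂/H₂` induced by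
`f`, which is injective. -/
theorem decomposition_coord_det_ne_zero {L₂ : Type*} [AddCommGroup L₂] [Module K L₂]
    {z₁ y₁ : L} {H₁ : Submodule K L} {z₂ y₂ : L₂} {H₂ : Submodule K L₂}
    (hD₁ : Function.Injective (decomposition z₁ y₁ H₁)) (f : L →ₗ[K] L₂) (hf : H₂.comap f ≤ H₁)
    {c d : Fin 2 → K} {h k : H₂} (hc : f z₁ = decomposition z₂ y₂ H₂ (c, h))
    (hd : f y₁ = decomposition z₂ y₂ H₂ (d, k)) :
    c 1 * d 0 - d 1 * c 0 ≠ 0 := by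
  intro h0
  obtain ⟨v, hv0, hv⟩ := (Matrix.exists_mulVec_eq_zero_iff (M := !![c 0, d 0; c 1, d 1])).2
    (by rw [Matrix.det_fin_two_of]; linear_combination -h0)
  have hv₀ : c 0 * v 0 + d 0 * v 1 = 0 := by
    simpa [Matrix.vecHead, Matrix.vecTail] using congrFun hv 0
  have hv₁ : c 1 * v 0 + d 1 * v 1 = 0 := by
    simpa [Matrix.vecHead, Matrix.vecTail] using congrFun hv 1
  have hfv : f (decomposition z₁ y₁ H₁ (v, 0)) = v 0 • (h : L₂) + v 1 • (k : L₂) := by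
    simp only [decomposition_apply, map_add, map_smul, hc, hd, ZeroMemClass.coe_zero, add_zero]
    linear_combination (norm := module) hv₀ • z₂ + hv₁ • y₂
  have hmem : decomposition z₁ y₁ H₁ (v, 0) ∈ H₁ :=
    hf (by rw [mem_comap, hfv]; exact add_mem (smul_mem _ _ h.2) (smul_mem _ _ k.2))
  exact hv0 (congrArg Prod.fst (hD₁ (show decomposition z₁ y₁ H₁ (v, 0) =
    decomposition z₁ y₁ H₁ (0, ⟨_, hmem⟩) by simp)))

theorem exists_linearEquiv_decomposition_map {L₂ : Type*} [AddCommGroup L₂] [Module K L₂]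
    {z₁ y₁ : L} {H₁ : Submodule K L} {z₂ y₂ : L₂} {H₂ : Submodule K L₂}
    (hD₁ : Function.Bijective (decomposition z₁ y₁ H₁))
    (hD₂ : Function.Bijective (decomposition z₂ y₂ H₂))
    {M : Matrix (Fin 2) (Fin 2) K} (hM : IsUnit M.det) (σ : H₁ ≃ₗ[K] H₂) :
    ∃ φ : L ≃ₗ[K] L₂, ∀ c h,
      φ (decomposition z₁ y₁ H₁ (c, h)) = decomposition z₂ y₂ H₂ (M.mulVec c, σ h) := by
  let D₁ := LinearEquiv.ofBijective _ hD₁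
  refine ⟨D₁.symm ≪≫ₗ ((M.toLinearEquiv' (M.invertibleOfIsUnitDet hM)).prodCongr σ) ≪≫ₗ
    LinearEquiv.ofBijective _ hD₂, fun c h => ?_⟩
  have hsymm : D₁.symm (decomposition z₁ y₁ H₁ (c, h)) = (c, h) := D₁.symm_apply_apply (c, h)
  simp only [LinearEquiv.trans_apply, hsymm, LinearEquiv.prodCongr_apply,
    LinearEquiv.ofBijective_apply]
  rfl

end Decomposition

theorem lie_smul_add_smul_add {R L : Type*} [CommRing R] [LieRing L] [LieAlgebra R L]
    {z y h h' : L} (hzy : ⁅z, y⁆ = 0) (hh : ⁅h, h'⁆ = 0) (s t s' t' : R) :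
    ⁅s • z + t • y + h, s' • z + t' • y + h'⁆ =
      s • ⁅z, h'⁆ + t • ⁅y, h'⁆ - s' • ⁅z, h⁆ - t' • ⁅y, h⁆ := by
  have hyz : ⁅y, z⁆ = 0 := by rw [← lie_skew, hzy, neg_zero]
  simp only [add_lie, lie_add, smul_lie, lie_smul, lie_self, hzy, hyz, hh, ← lie_skew h]
  module

section LieAlgebra

variable {K L₁ L₂ : Type*} [Field K] [LieRing L₁] [LieAlgebra K L₁] [LieRing L₂]
  [LieAlgebra K L₂]

theorem LieIdeal.lie_eq_zero_of_isLieAbelian {H : LieIdeal K L₁} [IsLieAbelian H] {x y : L₁}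
    (hx : x ∈ H) (hy : y ∈ H) : ⁅x, y⁆ = 0 :=
  congrArg Subtype.val (trivial_lie_zero H H ⟨x, hx⟩ ⟨y, hy⟩)

theorem ne_zero_of_lie_restrict_ne_zero {H : LieIdeal K L₁} {z : L₁} {f : Module.End K H}
    (hf : ∀ x : H, (f x : L₁) = ⁅z, (x : L₁)⁆) (hf0 : f ≠ 0) : z ≠ 0 := by
  rintro rfl
  exact hf0 (LinearMap.ext fun x => Subtype.ext (by simp [hf]))

variable {H₁ : LieIdeal K L₁} {H₂ : LieIdeal K L₂} {z₁ y₁ : L₁} {z₂ y₂ : L₂}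

theorem exists_linearEquiv_of_lieEquiv [IsLieAbelian H₂]
    (hD₁ : Function.Injective (decomposition z₁ y₁ H₁.toSubmodule))
    (hD₂ : Function.Surjective (decomposition z₂ y₂ H₂.toSubmodule))
    (e : L₁ ≃ₗ⁅K⁆ L₂) (he : H₁.map (e : L₁ →ₗ⁅K⁆ L₂) = H₂) :
    ∃ (σ : H₁ ≃ₗ[K] H₂) (α β γ δ : K), α * δ - β * γ ≠ 0 ∧
      (∀ x : H₁, ((σ ⟨⁅z₁, (x : L₁)⁆, H₁.lie_mem x.2⟩ : H₂) : L₂)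
          = γ • ⁅z₂, ((σ x : H₂) : L₂)⁆ + α • ⁅y₂, ((σ x : H₂) : L₂)⁆) ∧
      (∀ x : H₁, ((σ ⟨⁅y₁, (x : L₁)⁆, H₁.lie_mem x.2⟩ : H₂) : L₂)
          = δ • ⁅z₂, ((σ x : H₂) : L₂)⁆ + β • ⁅y₂, ((σ x : H₂) : L₂)⁆) := by
  have he' : H₁.toSubmodule.map (e : L₁ →ₗ[K] L₂) = H₂.toSubmodule := by
    rw [← he, LieIdeal.coe_map_of_surjective e.surjective]
    rfl
  let σ : H₁ ≃ₗ[K] H₂ :=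
    (e.toLinearEquiv.submoduleMap H₁.toSubmodule).trans (LinearEquiv.ofEq _ _ he')
  have bracket (v : L₁) (c : Fin 2 → K) (h : H₂)
      (hv : e v = decomposition z₂ y₂ H₂.toSubmodule (c, h)) (x : H₁) :
      e ⁅v, (x : L₁)⁆ = c 0 • ⁅z₂, ((σ x : H₂) : L₂)⁆ + c 1 • ⁅y₂, ((σ x : H₂) : L₂)⁆ := by
    have hσx : ((σ x : H₂) : L₂) = e x := rfl
    rw [LieEquiv.map_lie, hv, decomposition_apply, hσx, add_lie, add_lie, smul_lie, smul_lie,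
      LieIdeal.lie_eq_zero_of_isLieAbelian h.2 (hσx ▸ (σ x).2), add_zero]
  have hcomap : H₂.toSubmodule.comap (e : L₁ →ₗ[K] L₂) ≤ H₁.toSubmodule :=
    (he' ▸ comap_map_eq_of_injective e.injective _).le
  obtain ⟨⟨c, h⟩, hc⟩ := hD₂ (e z₁)
  obtain ⟨⟨d, k⟩, hd⟩ := hD₂ (e y₁)
  exact ⟨σ, c 1, d 1, c 0, d 0,
    decomposition_coord_det_ne_zero hD₁ (e : L₁ →ₗ[K] L₂) hcomap hc.symm hd.symm,
    bracket z₁ c h hc.symm, bracket y₁ d k hd.symm⟩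

theorem nonempty_lieEquiv_of_linearEquiv [IsLieAbelian H₁] [IsLieAbelian H₂]
    (hD₁ : Function.Bijective (decomposition z₁ y₁ H₁.toSubmodule))
    (hD₂ : Function.Bijective (decomposition z₂ y₂ H₂.toSubmodule))
    (hzy₁ : ⁅z₁, y₁⁆ = 0) (hzy₂ : ⁅z₂, y₂⁆ = 0)
    (σ : H₁ ≃ₗ[K] H₂) {α β γ δ : K} (hdet : α * δ - β * γ ≠ 0)
    (hσz : ∀ x : H₁, ((σ ⟨⁅z₁, (x : L₁)⁆, H₁.lie_mem x.2⟩ : H₂) : L₂)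
      = γ • ⁅z₂, ((σ x : H₂) : L₂)⁆ + α • ⁅y₂, ((σ x : H₂) : L₂)⁆)
    (hσy : ∀ x : H₁, ((σ ⟨⁅y₁, (x : L₁)⁆, H₁.lie_mem x.2⟩ : H₂) : L₂)
      = δ • ⁅z₂, ((σ x : H₂) : L₂)⁆ + β • ⁅y₂, ((σ x : H₂) : L₂)⁆) :
    Nonempty (L₁ ≃ₗ⁅K⁆ L₂) := by
  have hM : IsUnit (!![γ, δ; α, β]).det := by
    rw [Matrix.det_fin_two_of, isUnit_iff_ne_zero]
    contrapose! hdet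
    linear_combination -hdet
  obtain ⟨φ, hφD⟩ := exists_linearEquiv_decomposition_map hD₁ hD₂ hM σ
  set u := γ • z₂ + α • y₂
  set w := δ • z₂ + β • y₂
  have hφ (c : Fin 2 → K) (h : H₁) :
      φ (decomposition z₁ y₁ H₁.toSubmodule (c, h)) = c 0 • u + c 1 • w + σ h := by
    rw [hφD, decomposition_apply]
    simp [u, w, Matrix.vecHead, Matrix.vecTail]
    module
  have hφH (x : H₁) : φ x = σ x := by simpa using hφ 0 x
  have huw : ⁅u, w⁆ = 0 := by
    have := lie_smul_add_smul_add (h := 0) (h' := 0) hzy₂ (lie_zero 0) γ α δ β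
    simpa [u, w] using this
  have hu (x : H₁) : φ ⁅z₁, (x : L₁)⁆ = ⁅u, ((σ x : H₂) : L₂)⁆ := by
    rw [show ⁅z₁, (x : L₁)⁆ = ((⟨_, H₁.lie_mem x.2⟩ : H₁) : L₁) from rfl, hφH, hσz, add_lie,
      smul_lie, smul_lie]
  have hw (x : H₁) : φ ⁅y₁, (x : L₁)⁆ = ⁅w, ((σ x : H₂) : L₂)⁆ := by
    rw [show ⁅y₁, (x : L₁)⁆ = ((⟨_, H₁.lie_mem x.2⟩ : H₁) : L₁) from rfl, hφH, hσy, add_lie,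
      smul_lie, smul_lie]
  have map_lie (a b : L₁) : φ ⁅a, b⁆ = ⁅φ a, φ b⁆ := by
    obtain ⟨⟨c, h⟩, rfl⟩ := hD₁.2 a
    obtain ⟨⟨c', h'⟩, rfl⟩ := hD₁.2 b
    rw [hφ, hφ, decomposition_apply, decomposition_apply,
      lie_smul_add_smul_add hzy₁ (LieIdeal.lie_eq_zero_of_isLieAbelian h.2 h'.2),
      lie_smul_add_smul_add huw (LieIdeal.lie_eq_zero_of_isLieAbelian (σ h).2 (σ h').2)]
    simp only [map_sub, map_add, map_smul, hu, hw]
  exact ⟨LieEquiv.ofBijective ⟨φ.toLinearMap, fun {a b} => map_lie a b⟩ φ.bijective⟩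

end LieAlgebra

theorem stmt13_general
    (L₁ : Type) [LieRing L₁] [LieAlgebra ℝ L₁]
    (L₂ : Type) [LieRing L₂] [LieAlgebra ℝ L₂]
    (H₁ : LieIdeal ℝ L₁) (hH₁ : H₁ = LieAlgebra.derivedSeries ℝ L₁ 1)
    (H₂ : LieIdeal ℝ L₂) (hH₂ : H₂ = LieAlgebra.derivedSeries ℝ L₂ 1)
    (hab₁ : IsLieAbelian ↥H₁) (hab₂ : IsLieAbelian ↥H₂)
    (z₁ y₁ : L₁) (z₂ y₂ : L₂)
    (hsup₁ : Submodule.span ℝ {z₁} ⊔ Submodule.span ℝ {y₁} ⊔ H₁.toSubmodule = ⊤)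
    (hzind₁ : Submodule.span ℝ {z₁} ⊓ (Submodule.span ℝ {y₁} ⊔ H₁.toSubmodule) = ⊥)
    (hyind₁ : Submodule.span ℝ {y₁} ⊓ H₁.toSubmodule = ⊥)
    (hsup₂ : Submodule.span ℝ {z₂} ⊔ Submodule.span ℝ {y₂} ⊔ H₂.toSubmodule = ⊤)
    (hzind₂ : Submodule.span ℝ {z₂} ⊓ (Submodule.span ℝ {y₂} ⊔ H₂.toSubmodule) = ⊥)
    (hyind₂ : Submodule.span ℝ {y₂} ⊓ H₂.toSubmodule = ⊥)
    (hzy₁ : ⁅z₁, y₁⁆ = 0) (hzy₂ : ⁅z₂, y₂⁆ = 0)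
    (f₁ g₁ : Module.End ℝ ↥H₁)
    (hf₁ : ∀ x : ↥H₁, (f₁ x : L₁) = ⁅z₁, (x : L₁)⁆)
    (hg₁ : ∀ x : ↥H₁, (g₁ x : L₁) = ⁅y₁, (x : L₁)⁆)
    (f₂ g₂ : Module.End ℝ ↥H₂)
    (hf₂ : ∀ x : ↥H₂, (f₂ x : L₂) = ⁅z₂, (x : L₂)⁆)
    (hg₂ : ∀ x : ↥H₂, (g₂ x : L₂) = ⁅y₂, (x : L₂)⁆)
    (hli₁ : LinearIndependent ℝ ![f₁, g₁]) (hli₂ : LinearIndependent ℝ ![f₂, g₂]) :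
    Nonempty (L₁ ≃ₗ⁅ℝ⁆ L₂) ↔
      ∃ (σ : ↥H₁ ≃ₗ[ℝ] ↥H₂) (α β γ δ : ℝ),
        α * δ - β * γ ≠ 0 ∧
        (∀ x : ↥H₁, ((σ ⟨⁅z₁, (x : L₁)⁆, H₁.lie_mem x.2⟩ : ↥H₂) : L₂)
            = γ • ⁅z₂, ((σ x : ↥H₂) : L₂)⁆ + α • ⁅y₂, ((σ x : ↥H₂) : L₂)⁆) ∧
        (∀ x : ↥H₁, ((σ ⟨⁅y₁, (x : L₁)⁆, H₁.lie_mem x.2⟩ : ↥H₂) : L₂)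
            = δ • ⁅z₂, ((σ x : ↥H₂) : L₂)⁆ + β • ⁅y₂, ((σ x : ↥H₂) : L₂)⁆) := by
  have hD₁ : Function.Bijective (decomposition z₁ y₁ H₁.toSubmodule) :=
    ⟨decomposition_injective (ne_zero_of_lie_restrict_ne_zero hf₁ (hli₁.ne_zero 0))
      (ne_zero_of_lie_restrict_ne_zero hg₁ (hli₁.ne_zero 1)) hzind₁ hyind₁,
      decomposition_surjective hsup₁⟩
  have hD₂ : Function.Bijective (decomposition z₂ y₂ H₂.toSubmodule) :=
    ⟨decomposition_injective (ne_zero_of_lie_restrict_ne_zero hf₂ (hli₂.ne_zero 0))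
      (ne_zero_of_lie_restrict_ne_zero hg₂ (hli₂.ne_zero 1)) hzind₂ hyind₂,
      decomposition_surjective hsup₂⟩
  constructor
  · rintro ⟨e⟩
    exact exists_linearEquiv_of_lieEquiv hD₁.1 hD₂.2 e
      (by rw [hH₁, hH₂, LieIdeal.derivedSeries_map_eq 1 e.surjective])
  · rintro ⟨σ, α, β, γ, δ, hdet, hσz, hσy⟩
    exact nonempty_lieEquiv_of_linearEquiv hD₁ hD₂ hzy₁ hzy₂ σ hdet hσz hσy

/-- Let `L₁, L₂` be real Lie algebras whose derived algebras `Hᵢ := [Lᵢ, Lᵢ]` are abelian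
of dimension `n ≥ 1`, with `Lᵢ = ℝzᵢ ⊕ ℝyᵢ ⊕ Hᵢ` as vector spaces, `⁅zᵢ, yᵢ⁆ = 0`, and
the restrictions of `ad zᵢ`, `ad yᵢ` to `Hᵢ` linearly independent. Then `L₁ ≅ L₂` iff there
are a linear isomorphism `σ : H₁ → H₂` and scalars `α, β, γ, δ` with `αδ - βγ ≠ 0` such
that `σ ⁅z₁, x⁆ = γ • ⁅z₂, σ x⁆ + α • ⁅y₂, σ x⁆` and
`σ ⁅y₁, x⁆ = δ • ⁅z₂, σ x⁆ + β • ⁅y₂, σ x⁆` for all `x ∈ H₁`. -/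
theorem stmt13 (n : ℕ) (hn : 1 ≤ n)
    (L₁ : Type) [LieRing L₁] [LieAlgebra ℝ L₁] [FiniteDimensional ℝ L₁]
    (L₂ : Type) [LieRing L₂] [LieAlgebra ℝ L₂] [FiniteDimensional ℝ L₂]
    (H₁ : LieIdeal ℝ L₁) (hH₁ : H₁ = LieAlgebra.derivedSeries ℝ L₁ 1)
    (H₂ : LieIdeal ℝ L₂) (hH₂ : H₂ = LieAlgebra.derivedSeries ℝ L₂ 1)
    (hab₁ : IsLieAbelian ↥H₁) (hab₂ : IsLieAbelian ↥H₂)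
    (hd₁ : Module.finrank ℝ ↥H₁ = n) (hd₂ : Module.finrank ℝ ↥H₂ = n)
    (z₁ y₁ : L₁) (z₂ y₂ : L₂)
    (hsup₁ : Submodule.span ℝ {z₁} ⊔ Submodule.span ℝ {y₁} ⊔ H₁.toSubmodule = ⊤)
    (hzind₁ : Submodule.span ℝ {z₁} ⊓ (Submodule.span ℝ {y₁} ⊔ H₁.toSubmodule) = ⊥)
    (hyind₁ : Submodule.span ℝ {y₁} ⊓ H₁.toSubmodule = ⊥)
    (hsup₂ : Submodule.span ℝ {z₂} ⊔ Submodule.span ℝ {y₂} ⊔ H₂.toSubmodule = ⊤)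
    (hzind₂ : Submodule.span ℝ {z₂} ⊓ (Submodule.span ℝ {y₂} ⊔ H₂.toSubmodule) = ⊥)
    (hyind₂ : Submodule.span ℝ {y₂} ⊓ H₂.toSubmodule = ⊥)
    (hzy₁ : ⁅z₁, y₁⁆ = 0) (hzy₂ : ⁅z₂, y₂⁆ = 0)
    (f₁ g₁ : Module.End ℝ ↥H₁)
    (hf₁ : ∀ x : ↥H₁, (f₁ x : L₁) = ⁅z₁, (x : L₁)⁆)
    (hg₁ : ∀ x : ↥H₁, (g₁ x : L₁) = ⁅y₁, (x : L₁)⁆)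
    (f₂ g₂ : Module.End ℝ ↥H₂)
    (hf₂ : ∀ x : ↥H₂, (f₂ x : L₂) = ⁅z₂, (x : L₂)⁆)
    (hg₂ : ∀ x : ↥H₂, (g₂ x : L₂) = ⁅y₂, (x : L₂)⁆)
    (hli₁ : LinearIndependent ℝ ![f₁, g₁]) (hli₂ : LinearIndependent ℝ ![f₂, g₂]) :
    Nonempty (L₁ ≃ₗ⁅ℝ⁆ L₂) ↔
      ∃ (σ : ↥H₁ ≃ₗ[ℝ] ↥H₂) (α β γ δ : ℝ),
        α * δ - β * γ ≠ 0 ∧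
        (∀ x : ↥H₁, ((σ ⟨⁅z₁, (x : L₁)⁆, H₁.lie_mem x.2⟩ : ↥H₂) : L₂)
            = γ • ⁅z₂, ((σ x : ↥H₂) : L₂)⁆ + α • ⁅y₂, ((σ x : ↥H₂) : L₂)⁆) ∧
        (∀ x : ↥H₁, ((σ ⟨⁅y₁, (x : L₁)⁆, H₁.lie_mem x.2⟩ : ↥H₂) : L₂)
            = δ • ⁅z₂, ((σ x : ↥H₂) : L₂)⁆ + β • ⁅y₂, ((σ x : ↥H₂) : L₂)⁆) :=
  stmt13_general L₁ L₂ H₁ hH₁ H₂ hH₂ hab₁ hab₂ z₁ y₁ z₂ y₂ hsup₁ hzind₁ hyind₁ hsup₂ hzind₂ hyind₂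
    hzy₁ hzy₂ f₁ g₁ hf₁ hg₁ f₂ g₂ hf₂ hg₂ hli₁ hli₂
end

section
/- Let n ≥ 2 and let L be an indecomposable solvable real Lie algebra with dim L = n + 2 whose derived algebra H := [L,L] is nilpotent of dimension n. Suppose there exist z', y' ∈ L with L = ℝz' ⊕ ℝy' ⊕ H as vector spaces such that at least one of the following holds: (a) there is v ∈ H with [y', x] = [v, x] for all x ∈ H, or (b) setting K' := ℝy' ⊕ H, there is w ∈ K' with [z', x] = [w, x] for all x ∈ K'. Then there exist z, y ∈ L ∖ H with L = ℝz ⊕ ℝy ⊕ H as vector spaces, [y, x] = 0 for all x ∈ H, and such that, setting K := ℝy ⊕ H, there is no w ∈ K with [z, x] = [w, x] for all x ∈ K. -/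
open Module

section LieProduct

variable {R L : Type*} [CommRing R] [LieRing L] [LieAlgebra R L]

def Submodule.toLieSubalgebra (p : Submodule R L) (hp : ∀ x ∈ p, ∀ y ∈ p, ⁅x, y⁆ ∈ p) :
    LieSubalgebra R L :=
  { p with lie_mem' := fun hx hy => hp _ hx _ hy }

noncomputable def LieSubalgebra.prodEquivOfIsCompl (A B : LieSubalgebra R L)
    (h : IsCompl A.toSubmodule B.toSubmodule) (hAB : ∀ a ∈ A, ∀ b ∈ B, ⁅a, b⁆ = 0) :
    (A × B) ≃ₗ⁅R⁆ L :=
  { Submodule.prodEquivOfIsCompl _ _ h with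
    map_lie' := by
      rintro ⟨⟨a, ha⟩, ⟨b, hb⟩⟩ ⟨⟨a', ha'⟩, ⟨b', hb'⟩⟩
      have hba' : ⁅b, a'⁆ = 0 := by rw [← lie_skew, hAB a' ha' b hb, neg_zero]
      show ⁅a, a'⁆ + ⁅b, b'⁆ = ⁅a + b, a' + b'⁆
      simp only [lie_add, add_lie, hAB a ha b' hb', hba', add_zero]
      abel }

end LieProduct

lemma Submodule.span_singleton_sub_sup {R M : Type*} [Ring R] [AddCommGroup M] [Module R M]
    (p : Submodule R M) (x : M) {v : M} (hv : v ∈ p) :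
    R ∙ (x - v) ⊔ p = R ∙ x ⊔ p := by
  have key : ∀ u w : M, w ∈ p → u ∈ R ∙ (u - w) ⊔ p := fun u w hw => by
    simpa using Submodule.add_mem_sup (Submodule.mem_span_singleton_self (u - w)) hw
  refine le_antisymm (sup_le ?_ le_sup_right) (sup_le ?_ le_sup_right) <;>
    rw [Submodule.span_singleton_le_iff_mem]
  · simpa using key (x - v) (-v) (neg_mem hv)
  · exact key x v hv

section Codimension

variable {K V : Type*} [DivisionRing K] [AddCommGroup V] [Module K V] [FiniteDimensional K V]

lemma Submodule.finrank_span_singleton_sup_le (v : V) (p : Submodule K V) :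
    finrank K ↥(K ∙ v ⊔ p) ≤ finrank K p + 1 := by
  by_cases hv : v ∈ p
  · rw [sup_eq_right.mpr ((Submodule.span_singleton_le_iff_mem v p).mpr hv)]
    omega
  · rw [sup_comm, Submodule.finrank_sup_span_singleton hv]

lemma Submodule.notMem_of_span_sup_span_sup_eq_top {p : Submodule K V}
    (hp : finrank K p + 2 = finrank K V) {z y : V} (h : K ∙ z ⊔ K ∙ y ⊔ p = ⊤) :
    z ∉ K ∙ y ⊔ p ∧ y ∉ p := by
  have hne (v : V) : K ∙ v ⊔ p ≠ ⊤ := fun htop => by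
    have := Submodule.finrank_span_singleton_sup_le v p
    rw [htop, finrank_top] at this
    omega
  rw [sup_assoc] at h
  constructor
  · intro hz
    rw [sup_eq_right.mpr ((Submodule.span_singleton_le_iff_mem z _).mpr hz)] at h
    exact hne y h
  · intro hy
    rw [sup_eq_right.mpr ((Submodule.span_singleton_le_iff_mem y p).mpr hy)] at h
    exact hne z h

end Codimension

section Decomposable

variable {L : Type} [LieRing L] [LieAlgebra ℝ L]

theorem decomposable_of_isCompl (A B : LieSubalgebra ℝ L) [Nontrivial A] [Nontrivial B]
    (h : IsCompl A.toSubmodule B.toSubmodule) (hAB : ∀ a ∈ A, ∀ b ∈ B, ⁅a, b⁆ = 0) :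
    Decomposable L :=
  ⟨A, B, _, _, _, _, ‹_›, ‹_›, ⟨(LieSubalgebra.prodEquivOfIsCompl A B h hAB).symm⟩⟩

theorem decomposable_of_lie_eq_lie (K : LieSubalgebra ℝ L) [Nontrivial K] {z w : L}
    (hz : z ∉ K) (hsup : ℝ ∙ z ⊔ K.toSubmodule = ⊤) (hw : w ∈ K)
    (hzw : ∀ x ∈ K, ⁅z, x⁆ = ⁅w, x⁆) :
    Decomposable L := by
  set c := z - w with hc
  have hcK : c ∉ K := fun h => hz (by simpa [c] using K.add_mem h hw)
  have hc0 : c ≠ 0 := fun h => hcK (h ▸ K.zero_mem)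
  have hK : IsCoatom K.toSubmodule :=
    covBy_top_iff.mp (hsup ▸ Submodule.covBy_span_singleton_sup hz)
  have hcx : ∀ x ∈ K, ⁅c, x⁆ = 0 := fun x hx => by rw [hc, sub_lie, hzw x hx, sub_self]
  let C := (ℝ ∙ c).toLieSubalgebra fun x hx y hy => by
    obtain ⟨s, rfl⟩ := Submodule.mem_span_singleton.mp hx
    obtain ⟨t, rfl⟩ := Submodule.mem_span_singleton.mp hy
    simp
  have : Nontrivial C := Submodule.nontrivial_span_singleton hc0
  refine decomposable_of_isCompl C K
    (Submodule.isCompl_span_singleton_of_isCoatom_of_notMem hK hcK).symm fun a ha x hx => ?_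
  obtain ⟨t, rfl⟩ := Submodule.mem_span_singleton.mp ha
  rw [smul_lie, hcx x hx, smul_zero]

end Decomposable

theorem not_exists_lie_eq_lie_of_not_decomposable {L : Type} [LieRing L] [LieAlgebra ℝ L]
    [FiniteDimensional ℝ L] (hindec : ¬ Decomposable L) {H : Submodule ℝ L}
    (hH : ∀ a b : L, ⁅a, b⁆ ∈ H) (hcodim : finrank ℝ H + 2 = finrank ℝ L) {z y : L}
    (h : ℝ ∙ z ⊔ ℝ ∙ y ⊔ H = ⊤) :
    ¬ ∃ w ∈ ℝ ∙ y ⊔ H, ∀ x ∈ ℝ ∙ y ⊔ H, ⁅z, x⁆ = ⁅w, x⁆ := by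
  rintro ⟨w, hw, hzw⟩
  obtain ⟨hz, hy⟩ := Submodule.notMem_of_span_sup_span_sup_eq_top hcodim h
  let K := (ℝ ∙ y ⊔ H).toLieSubalgebra fun a _ b _ => Submodule.mem_sup_right (hH a b)
  have hy0 : y ≠ 0 := fun h0 => hy (h0 ▸ H.zero_mem)
  have : Nontrivial K := nontrivial_of_ne
    ⟨y, Submodule.mem_sup_left (Submodule.mem_span_singleton_self y)⟩ 0
    fun h0 => hy0 (congrArg Subtype.val h0)
  exact hindec (decomposable_of_lie_eq_lie K hz (by rwa [sup_assoc] at h) hw hzw)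

theorem stmt14_general (n : ℕ) (L : Type) [LieRing L] [LieAlgebra ℝ L]
    [FiniteDimensional ℝ L]
    (hindec : ¬ Decomposable L)
    (hdim : Module.finrank ℝ L = n + 2)
    (H : LieIdeal ℝ L) (hH : H = LieAlgebra.derivedSeries ℝ L 1)
    (hHdim : Module.finrank ℝ ↥H = n)
    (z' y' : L)
    (hsup' : Submodule.span ℝ {z'} ⊔ Submodule.span ℝ {y'} ⊔ H.toSubmodule = ⊤)
    (hor : (∃ v ∈ H, ∀ x ∈ H, ⁅y', x⁆ = ⁅v, x⁆) ∨
           (∃ w ∈ Submodule.span ℝ {y'} ⊔ H.toSubmodule,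
              ∀ x ∈ Submodule.span ℝ {y'} ⊔ H.toSubmodule, ⁅z', x⁆ = ⁅w, x⁆)) :
    ∃ z y : L, z ∉ H ∧ y ∉ H ∧
      Submodule.span ℝ {z} ⊔ Submodule.span ℝ {y} ⊔ H.toSubmodule = ⊤ ∧
      Submodule.span ℝ {z} ⊓ (Submodule.span ℝ {y} ⊔ H.toSubmodule) = ⊥ ∧
      Submodule.span ℝ {y} ⊓ H.toSubmodule = ⊥ ∧
      (∀ x ∈ H, ⁅y, x⁆ = 0) ∧
      ¬ (∃ w ∈ Submodule.span ℝ {y} ⊔ H.toSubmodule,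
            ∀ x ∈ Submodule.span ℝ {y} ⊔ H.toSubmodule, ⁅z, x⁆ = ⁅w, x⁆) := by
  have hbr (a b : L) : ⁅a, b⁆ ∈ H.toSubmodule :=
    hH ▸ LieSubmodule.lie_mem_lie (LieSubmodule.mem_top a) (LieSubmodule.mem_top b)
  have hcodim : finrank ℝ H.toSubmodule + 2 = finrank ℝ L := by
    rw [hdim, ← hHdim]; rfl
  have not_inner {z y : L} :=
    not_exists_lie_eq_lie_of_not_decomposable hindec hbr hcodim (z := z) (y := y)
  obtain ⟨v, hv, hy'v⟩ := hor.resolve_right (not_inner hsup')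
  set y := y' - v
  have hsup : ℝ ∙ z' ⊔ ℝ ∙ y ⊔ H.toSubmodule = ⊤ := by
    rwa [sup_assoc, Submodule.span_singleton_sub_sup _ y' hv, ← sup_assoc]
  obtain ⟨hz, hy⟩ := Submodule.notMem_of_span_sup_span_sup_eq_top hcodim hsup
  refine ⟨z', y, fun h => hz (Submodule.mem_sup_right h), hy, hsup,
    (Submodule.disjoint_span_singleton_of_notMem hz).symm.eq_bot,
    (Submodule.disjoint_span_singleton_of_notMem hy).symm.eq_bot,
    fun x hx => by rw [sub_lie, hy'v x hx, sub_self], not_inner hsup⟩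

/-- Let `L` be an indecomposable solvable real Lie algebra of dimension `n + 2` (`n ≥ 2`)
whose derived algebra `H := [L,L]` is nilpotent of dimension `n`. If there are
`z', y' ∈ L` with `L = ℝz' ⊕ ℝy' ⊕ H` such that the restriction of `ad y'` to `H` is
inner, or (with `K' := ℝy' ⊕ H`) the restriction of `ad z'` to `K'` is inner, then there
are `z, y ∈ L ∖ H` with `L = ℝz ⊕ ℝy ⊕ H`, `⁅y, H⁆ = 0`, and such that, setting
`K := ℝy ⊕ H`, the restriction of `ad z` to `K` is not inner. -/
theorem stmt14 (n : ℕ) (hn : 2 ≤ n) (L : Type) [LieRing L] [LieAlgebra ℝ L]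
    [FiniteDimensional ℝ L] [LieAlgebra.IsSolvable L]
    (hindec : ¬ Decomposable L)
    (hdim : Module.finrank ℝ L = n + 2)
    (H : LieIdeal ℝ L) (hH : H = LieAlgebra.derivedSeries ℝ L 1)
    (hnil : LieRing.IsNilpotent ↥H)
    (hHdim : Module.finrank ℝ ↥H = n)
    (z' y' : L)
    (hsup' : Submodule.span ℝ {z'} ⊔ Submodule.span ℝ {y'} ⊔ H.toSubmodule = ⊤)
    (hzind' : Submodule.span ℝ {z'} ⊓ (Submodule.span ℝ {y'} ⊔ H.toSubmodule) = ⊥)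
    (hyind' : Submodule.span ℝ {y'} ⊓ H.toSubmodule = ⊥)
    (hor : (∃ v ∈ H, ∀ x ∈ H, ⁅y', x⁆ = ⁅v, x⁆) ∨
           (∃ w ∈ Submodule.span ℝ {y'} ⊔ H.toSubmodule,
              ∀ x ∈ Submodule.span ℝ {y'} ⊔ H.toSubmodule, ⁅z', x⁆ = ⁅w, x⁆)) :
    ∃ z y : L, z ∉ H ∧ y ∉ H ∧
      Submodule.span ℝ {z} ⊔ Submodule.span ℝ {y} ⊔ H.toSubmodule = ⊤ ∧
      Submodule.span ℝ {z} ⊓ (Submodule.span ℝ {y} ⊔ H.toSubmodule) = ⊥ ∧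
      Submodule.span ℝ {y} ⊓ H.toSubmodule = ⊥ ∧
      (∀ x ∈ H, ⁅y, x⁆ = 0) ∧
      ¬ (∃ w ∈ Submodule.span ℝ {y} ⊔ H.toSubmodule,
            ∀ x ∈ Submodule.span ℝ {y} ⊔ H.toSubmodule, ⁅z, x⁆ = ⁅w, x⁆) :=
  stmt14_general n L hindec hdim H hH hHdim z' y' hsup' hor
end

section
/- Let n ≥ 2 and let L be a solvable real Lie algebra with dim L = n + 2 whose derived algebra H := [L,L] is nilpotent of dimension n, and let z, y ∈ L be such that L = ℝz ⊕ ℝy ⊕ H as vector spaces and [y, x] = 0 for all x ∈ H. Then there is no element u ∈ H with [z, x] = [u, x] for all x ∈ H; that is, the restriction of ad z to H is an outer derivation of H. -/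
/-!
If `ad z` agreed on `H` with `ad u`, `u ∈ H`, then, since `ad y` kills `H`, every bracket of
`L = ℝz + ℝy + H` would lie in `ℝ⁅z, y⁆ + [H, H]`, so `H = [L, L]` would have
`dim H / [H, H] ≤ 1`. A nilpotent Lie algebra generated modulo its derived algebra by one
element is abelian (`[H, H] = [H, ℝa + [H, H]] ⊆ [H, [H, H]]`, so `[H, H]` lies in every term
of the lower central series), hence `H ⊆ ℝ⁅z, y⁆` and `dim H ≤ 1 < 2 ≤ n`.
-/

open LieAlgebra LieModule Submodule

namespace LieAlgebra

variable {R L : Type*} [CommRing R] [LieRing L] [LieAlgebra R L]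

lemma derivedSeries_one_eq_bot_of_span_singleton_sup_eq_top [LieRing.IsNilpotent L] {a : L}
    (h : R ∙ a ⊔ (derivedSeries R L 1 : Submodule R L) = ⊤) : derivedSeries R L 1 = ⊥ := by
  set D := derivedSeries R L 1
  have hD : D = ⁅(⊤ : LieIdeal R L), ⊤⁆ := rfl
  have hdecomp : ∀ x : L, ∃ α : R, ∃ d ∈ D, α • a + d = x := fun x => by
    obtain ⟨_, ha, d, hd, rfl⟩ := mem_sup.mp (h ▸ mem_top : x ∈ R ∙ a ⊔ (D : Submodule R L))
    obtain ⟨α, rfl⟩ := mem_span_singleton.mp ha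
    exact ⟨α, d, hd, rfl⟩
  have hlie_a : ∀ x : L, ⁅x, a⁆ ∈ ⁅(⊤ : LieIdeal R L), D⁆ := fun x => by
    obtain ⟨α, d, hd, rfl⟩ := hdecomp x
    rw [add_lie, smul_lie, lie_self, smul_zero, zero_add, ← lie_skew]
    exact neg_mem (LieSubmodule.lie_mem_lie (LieSubmodule.mem_top _) hd)
  have hD_le : D ≤ ⁅(⊤ : LieIdeal R L), D⁆ := by
    rw [hD, LieSubmodule.lie_le_iff]
    rintro x - m -
    obtain ⟨β, d, hd, rfl⟩ := hdecomp m
    rw [lie_add, lie_smul]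
    exact add_mem (smul_mem _ β (hlie_a x)) (LieSubmodule.lie_mem_lie (LieSubmodule.mem_top _) hd)
  have hlcs : ∀ k, D ≤ lowerCentralSeries R L L k := by
    intro k
    induction k with
    | zero => exact le_top
    | succ k ih =>
      rw [lowerCentralSeries_succ]
      exact hD_le.trans (LieSubmodule.mono_lie_right _ ih)
  obtain ⟨k, hk⟩ := IsNilpotent.nilpotent R L L
  exact le_bot_iff.mp (hk ▸ hlcs k)

lemma lie_mem_span_singleton_of_mem_span_pair {x y s t : L} (hs : s ∈ span R {x, y})
    (ht : t ∈ span R {x, y}) : ⁅s, t⁆ ∈ R ∙ ⁅x, y⁆ := by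
  obtain ⟨a, b, rfl⟩ := mem_span_pair.mp hs
  obtain ⟨c, d, rfl⟩ := mem_span_pair.mp ht
  refine mem_span_singleton.mpr ⟨a * d - b * c, ?_⟩
  simp only [add_lie, lie_add, smul_lie, lie_smul, lie_self, ← lie_skew y x]
  module

lemma le_span_singleton_of_le_span_singleton_sup_lie {I : LieIdeal R L} [LieRing.IsNilpotent I]
    {c : L} (hc : c ∈ I) (h : (I : Submodule R L) ≤ R ∙ c ⊔ (⁅I, I⁆ : LieIdeal R L)) :
    (I : Submodule R L) ≤ R ∙ c := by
  have hII : ⁅I, I⁆ = ⊥ := by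
    rw [← derivedSeriesOfIdeal_zero R L I, ← derivedSeriesOfIdeal_succ,
      ← LieIdeal.derivedSeries_eq_bot_iff]
    refine derivedSeries_one_eq_bot_of_span_singleton_sup_eq_top (a := (⟨c, hc⟩ : I)) ?_
    refine eq_top_iff.mpr fun x _ => ?_
    obtain ⟨_, hα, d, hd, hx⟩ := mem_sup.mp (h x.2)
    obtain ⟨α, rfl⟩ := mem_span_singleton.mp hα
    have hdI : d ∈ I := LieSubmodule.lie_le_left I I hd
    have hd' : (⟨d, hdI⟩ : I) ∈ derivedSeries R I 1 := by
      rw [LieIdeal.derivedSeries_eq_derivedSeriesOfIdeal_comap]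
      exact hd
    obtain rfl : α • (⟨c, hc⟩ : I) + ⟨d, hdI⟩ = x := Subtype.ext hx
    exact add_mem (mem_sup_left (smul_mem _ α (mem_span_singleton_self _))) (mem_sup_right hd')
  simpa [hII] using h

lemma derivedSeries_one_le_span_singleton_sup_lie {I : LieIdeal R L} {z y u : L}
    (hsup : R ∙ z ⊔ R ∙ y ⊔ (I : Submodule R L) = ⊤) (hy : ∀ x ∈ I, ⁅y, x⁆ = 0) (hu : u ∈ I)
    (hzu : ∀ x ∈ I, ⁅z, x⁆ = ⁅u, x⁆) :
    (derivedSeries R L 1 : Submodule R L) ≤ R ∙ ⁅z, y⁆ ⊔ (⁅I, I⁆ : LieIdeal R L) := by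
  have hdecomp : ∀ p : L, p ∈ span R {z, y} ⊔ (I : Submodule R L) := fun p => by
    rw [← span_insert] at hsup
    exact hsup ▸ mem_top
  have hspan_I : ∀ s ∈ span R {z, y}, ∀ x ∈ I, ⁅s, x⁆ ∈ ⁅I, I⁆ := by
    intro s hs x hx
    obtain ⟨a, b, rfl⟩ := mem_span_pair.mp hs
    rw [add_lie, smul_lie, smul_lie, hzu x hx, hy x hx, smul_zero, add_zero]
    exact smul_mem _ a (LieSubmodule.lie_mem_lie hu hx)
  rw [coe_derivedSeries_one_eq, span_le]
  rintro _ ⟨p, q, rfl⟩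
  obtain ⟨s, hs, x, hx, rfl⟩ := mem_sup.mp (hdecomp p)
  obtain ⟨t, ht, w, hw, rfl⟩ := mem_sup.mp (hdecomp q)
  rw [add_lie, lie_add, lie_add, ← lie_skew x t]
  exact add_mem (add_mem (mem_sup_left (lie_mem_span_singleton_of_mem_span_pair hs ht))
    (mem_sup_right (hspan_I s hs w hw))) (add_mem (mem_sup_right (neg_mem (hspan_I t ht x hx)))
      (mem_sup_right (LieSubmodule.lie_mem_lie hx hw)))

end LieAlgebra

theorem stmt15_general (n : ℕ) (hn : 2 ≤ n) (L : Type) [LieRing L] [LieAlgebra ℝ L]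
    (H : LieIdeal ℝ L) (hH : H = LieAlgebra.derivedSeries ℝ L 1)
    (hnil : LieRing.IsNilpotent ↥H)
    (hHdim : Module.finrank ℝ ↥H = n)
    (z y : L)
    (hsup : Submodule.span ℝ {z} ⊔ Submodule.span ℝ {y} ⊔ H.toSubmodule = ⊤)
    (hy : ∀ x ∈ H, ⁅y, x⁆ = 0) :
    ¬ ∃ u ∈ H, ∀ x ∈ H, ⁅z, x⁆ = ⁅u, x⁆ := by
  rintro ⟨u, hu, hzu⟩
  have hzy : ⁅z, y⁆ ∈ H :=
    hH ▸ LieSubmodule.lie_mem_lie (LieSubmodule.mem_top z) (LieSubmodule.mem_top y)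
  have hH_le : H.toSubmodule ≤ ℝ ∙ ⁅z, y⁆ :=
    le_span_singleton_of_le_span_singleton_sup_lie hzy <|
      (congrArg LieSubmodule.toSubmodule hH).le.trans
        (derivedSeries_one_le_span_singleton_sup_lie hsup hy hu hzu)
  have : n ≤ 1 :=
    hHdim ▸ (Submodule.finrank_mono hH_le).trans (by simpa using finrank_span_le_card {⁅z, y⁆})
  omega

/-- Let `L` be a solvable real Lie algebra of dimension `n + 2` (`n ≥ 2`) whose derived
algebra `H := [L,L]` is nilpotent of dimension `n`, and `z, y ∈ L` with
`L = ℝz ⊕ ℝy ⊕ H` as vector spaces and `⁅y, H⁆ = 0`. Then the restriction of `ad z`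
to `H` is an outer derivation of `H`: no `u ∈ H` satisfies `⁅z, x⁆ = ⁅u, x⁆` for all
`x ∈ H`. -/
theorem stmt15 (n : ℕ) (hn : 2 ≤ n) (L : Type) [LieRing L] [LieAlgebra ℝ L]
    [FiniteDimensional ℝ L] [LieAlgebra.IsSolvable L]
    (hdim : Module.finrank ℝ L = n + 2)
    (H : LieIdeal ℝ L) (hH : H = LieAlgebra.derivedSeries ℝ L 1)
    (hnil : LieRing.IsNilpotent ↥H)
    (hHdim : Module.finrank ℝ ↥H = n)
    (z y : L)
    (hsup : Submodule.span ℝ {z} ⊔ Submodule.span ℝ {y} ⊔ H.toSubmodule = ⊤)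
    (hzind : Submodule.span ℝ {z} ⊓ (Submodule.span ℝ {y} ⊔ H.toSubmodule) = ⊥)
    (hyind : Submodule.span ℝ {y} ⊓ H.toSubmodule = ⊥)
    (hy : ∀ x ∈ H, ⁅y, x⁆ = 0) :
    ¬ ∃ u ∈ H, ∀ x ∈ H, ⁅z, x⁆ = ⁅u, x⁆ :=
  stmt15_general n hn L H hH hnil hHdim z y hsup hy
end

section
/- Let n ≥ 2 and let L be a solvable real Lie algebra with dim L = n + 2 whose derived algebra H := [L,L] is nilpotent of dimension n, and let z, y ∈ L be such that L = ℝz ⊕ ℝy ⊕ H as vector spaces and [y, x] = 0 for all x ∈ H. Then the following are equivalent: (i) L is decomposable; (ii) L is isomorphic as a Lie algebra to ℝ × L̄ (with ℝ the 1-dimensional abelian Lie algebra) for some solvable real Lie algebra L̄ with dim L̄ = n + 1 whose derived algebra [L̄,L̄] is isomorphic to H; (iii) there exists w in the center Z(H) of H with [z, y] = [z, w]. -/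
attribute [local instance 100] LieRing.ofAssociativeRing

/-! All three conditions are equivalent to the existence of a central element `c ∉ H`.

Such a `c` splits off a line: any complement `S` of `ℝ c` containing `H` is an ideal, the map
`(t, s) ↦ t • c + s` is a Lie isomorphism `ℝ × S ≃ L`, and `[S, S] = [L, L]` because `c` is
central. Writing `c = a • z + b • y + h` with `h ∈ H`, `⁅c, y⁆ = 0` gives `a • ⁅z, y⁆ = 0`, so
either `⁅z, y⁆ = 0` (take `w = 0`) or `a = 0`, `b ≠ 0` and `w = -b⁻¹ • h` works; conversely `y - w`
is central and not in `H`.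

If `L ≅ L₁ × L₂` with nonzero solvable factors, each `[Lᵢ, Lᵢ]` is proper while the codimensions
add up to at most `codim H = 2`, so both are `1`. Some component `yᵢ` of `y` lies outside
`[Lᵢ, Lᵢ]`; then `Lᵢ = ℝ yᵢ ⊕ [Lᵢ, Lᵢ]`, and since `y` centralizes `H`, `yᵢ` is central in `Lᵢ`,
which gives the central element `(yᵢ, 0) ∉ H`. -/

open LieAlgebra Module Submodule

theorem Submodule.notMem_span_singleton_sup_of_finrank_eq_add_two {K V : Type*} [Field K]
    [AddCommGroup V] [Module K V] [FiniteDimensional K V] {z y : V} {p : Submodule K V}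
    (h : K ∙ z ⊔ K ∙ y ⊔ p = ⊤) (hdim : finrank K V = finrank K p + 2) : y ∉ K ∙ z ⊔ p := by
  intro hy
  have htop : K ∙ z ⊔ p = ⊤ := by
    rw [eq_top_iff, ← h]
    exact sup_le (sup_le le_sup_left ((span_singleton_le_iff_mem _ _).mpr hy)) le_sup_right
  have hle := finrank_add_le_finrank_add_finrank (K ∙ z) p
  have hz : finrank K (K ∙ z) ≤ 1 := by simpa using finrank_span_le_card ({z} : Set V)
  rw [htop, finrank_top] at hle
  omega

namespace LieAlgebra

section CommRing

variable {R L L' : Type*} [CommRing R] [LieRing L] [LieAlgebra R L] [LieRing L'] [LieAlgebra R L']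

theorem lie_mem_derivedSeries_one (x y : L) : ⁅x, y⁆ ∈ derivedSeries R L 1 := by
  rw [derivedSeries_def, derivedSeriesOfIdeal_succ, derivedSeriesOfIdeal_zero]
  exact LieSubmodule.lie_mem_lie (LieSubmodule.mem_top x) (LieSubmodule.mem_top y)

theorem _root_.LieHom.map_mem_derivedSeries (f : L →ₗ⁅R⁆ L') {k : ℕ} {x : L}
    (hx : x ∈ derivedSeries R L k) : f x ∈ derivedSeries R L' k :=
  LieIdeal.derivedSeries_map_le k (LieIdeal.mem_map hx)

theorem mem_center_iff_ker_ad_eq_top {c : L} :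
    c ∈ center R L ↔ LinearMap.ker (ad R L c) = ⊤ := by
  rw [LinearMap.ker_eq_top, ← LieHom.mem_ker, ad_ker_eq_self_module_ker, self_module_ker_eq_center]

theorem lie_eq_lie_of_sub_mem_center {a a' b b' : L} (ha : a - a' ∈ center R L)
    (hb : b - b' ∈ center R L) : ⁅a, b⁆ = ⁅a', b'⁆ := by
  have hsplit : ⁅a, b⁆ - ⁅a', b'⁆ = ⁅a - a', b⁆ + ⁅a', b - b'⁆ := by
    rw [sub_lie, lie_sub]; abel
  rw [← sub_eq_zero, hsplit, ← lie_skew (a - a') b, (LieModule.mem_maxTrivSubmodule R L L _).mp ha,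
    (LieModule.mem_maxTrivSubmodule R L L _).mp hb, neg_zero, add_zero]

theorem _root_.LieEquiv.map_mem_center (e : L ≃ₗ⁅R⁆ L') {c : L} (hc : c ∈ center R L) :
    e c ∈ center R L' :=
  (LieModule.mem_maxTrivSubmodule R L' L' _).mpr fun x => by
    rw [← e.apply_symm_apply x, ← e.map_lie, (LieModule.mem_maxTrivSubmodule R L L c).mp hc,
      map_zero]

theorem inl_mem_center {L₁ L₂ : Type*} [LieRing L₁] [LieAlgebra R L₁] [LieRing L₂]
    [LieAlgebra R L₂] {c : L₁} (hc : c ∈ center R L₁) : ((c, 0) : L₁ × L₂) ∈ center R (L₁ × L₂) :=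
  (LieModule.mem_maxTrivSubmodule R _ _ _).mpr fun p =>
    Prod.ext ((LieModule.mem_maxTrivSubmodule R L₁ L₁ c).mp hc p.1) (lie_zero p.2)

theorem nonempty_lieEquiv_derivedSeries_of_sup_eq_top {c : L} (hc : c ∈ center R L)
    (S : LieSubalgebra R L) (h : R ∙ c ⊔ S.toSubmodule = ⊤) :
    Nonempty (derivedSeries R S 1 ≃ₗ⁅R⁆ derivedSeries R L 1) := by
  have hdec : ∀ a : L, ∃ s : S, a - s ∈ center R L := fun a => by
    obtain ⟨u, hu, s, hs, rfl⟩ := mem_sup.mp (h ▸ mem_top : a ∈ R ∙ c ⊔ S.toSubmodule)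
    refine ⟨⟨s, hs⟩, ?_⟩
    simpa using (span_singleton_le_iff_mem c (center R L).toSubmodule).mpr hc hu
  let f : derivedSeries R S 1 →ₗ⁅R⁆ L := S.incl.comp (derivedSeries R S 1).incl
  have hf : Function.Injective f := Subtype.val_injective.comp Subtype.val_injective
  have hrange : f.range = (derivedSeries R L 1).toLieSubalgebra := by
    refine le_antisymm ?_ ?_
    · rintro _ ⟨d, rfl⟩
      exact S.incl.map_mem_derivedSeries d.2
    · rw [← LieSubalgebra.toSubmodule_le_toSubmodule, coe_derivedSeries_one_eq, span_le]
      rintro _ ⟨a, b, rfl⟩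
      obtain ⟨s, hs⟩ := hdec a
      obtain ⟨s', hs'⟩ := hdec b
      exact ⟨⟨⁅s, s'⁆, lie_mem_derivedSeries_one s s'⟩, (lie_eq_lie_of_sub_mem_center hs hs').symm⟩
  exact ⟨(LieEquiv.ofInjective f hf).trans (LieEquiv.ofEq f.range _ (by rw [hrange]))⟩

theorem sub_mem_center_of_lie_eq {z y : L} {H : LieIdeal R L}
    (hsup : R ∙ z ⊔ R ∙ y ⊔ H.toSubmodule = ⊤) (hy : ∀ x ∈ H, ⁅y, x⁆ = 0) {w : H}
    (hw : w ∈ center R H) (hzw : ⁅z, y⁆ = ⁅z, (w : L)⁆) : y - w ∈ center R L := by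
  have hwx : ∀ x ∈ H, ⁅(w : L), x⁆ = 0 := fun x hx => by
    rw [← lie_skew, neg_eq_zero]
    exact congrArg Subtype.val ((LieModule.mem_maxTrivSubmodule R H H w).mp hw ⟨x, hx⟩)
  rw [mem_center_iff_ker_ad_eq_top, eq_top_iff, ← hsup]
  refine sup_le (sup_le ?_ ?_) fun x hx => ?_ <;>
    simp only [span_singleton_le_iff_mem, LinearMap.mem_ker, ad_apply]
  · rw [sub_lie, ← lie_skew y z, ← lie_skew (w : L) z, hzw, sub_self]
  · rw [sub_lie, lie_self, ← lie_skew, hy _ w.2, neg_zero, sub_zero]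
  · rw [sub_lie, hy x hx, hwx x hx, sub_zero]

end CommRing

section Field

variable {K L : Type*} [Field K] [LieRing L] [LieAlgebra K L]

theorem finrank_derivedSeries_lt [FiniteDimensional K L] [IsSolvable L] [Nontrivial L] :
    finrank K (derivedSeries K L 1) < finrank K L :=
  Submodule.finrank_lt fun h =>
    (derivedSeries_lt_top_of_solvable K L).ne ((LieSubmodule.toSubmodule_eq_top _).mp h)

theorem mem_center_of_finrank_le_finrank_derivedSeries_add_one [FiniteDimensional K L] {y : L}
    (hy : y ∉ derivedSeries K L 1)
    (hrank : finrank K L ≤ finrank K (derivedSeries K L 1) + 1)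
    (hyD : ∀ d ∈ derivedSeries K L 1, ⁅y, d⁆ = 0) : y ∈ center K L := by
  have htop : (derivedSeries K L 1).toSubmodule ⊔ K ∙ y = ⊤ :=
    eq_top_of_finrank_eq ((finrank_le _).antisymm (finrank_sup_span_singleton hy ▸ hrank))
  rw [mem_center_iff_ker_ad_eq_top, eq_top_iff, ← htop]
  refine sup_le (fun d hd => hyD d hd) ?_
  rw [span_singleton_le_iff_mem, LinearMap.mem_ker, ad_apply, lie_self]

theorem nonempty_lieEquiv_prod_of_isCompl {c : L} (hc : c ∈ center K L) (hc0 : c ≠ 0)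
    (S : LieSubalgebra K L) (h : IsCompl (K ∙ c) S.toSubmodule) : Nonempty (L ≃ₗ⁅K⁆ K × S) := by
  let f : (K × S) ≃ₗ[K] L :=
    ((LinearEquiv.toSpanNonzeroSingleton K L c hc0).prodCongr (LinearEquiv.refl K S)).trans
      (prodEquivOfIsCompl _ _ h)
  have hf : ∀ p : K × S, f p = p.1 • c + p.2 := fun _ => rfl
  have hfc : ∀ p : K × S, f p - p.2 ∈ center K L := fun p => by
    rw [hf, add_sub_cancel_right]
    exact (center K L).smul_mem p.1 hc
  refine ⟨LieEquiv.symm { f with map_lie' := fun {p q} => ?_ }⟩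
  change f ⁅p, q⁆ = ⁅f p, f q⁆
  rw [lie_eq_lie_of_sub_mem_center (hfc p) (hfc q), hf]
  change ⁅p.1, q.1⁆ • c + ((⁅p.2, q.2⁆ : S) : L) = _
  rw [LieRing.of_associative_ring_bracket, mul_comm, sub_self, zero_smul, zero_add,
    LieSubalgebra.coe_bracket]

theorem exists_lieSubalgebra_lieEquiv_prod_of_mem_center [FiniteDimensional K L] {c : L}
    (hc : c ∈ center K L) (hcD : c ∉ derivedSeries K L 1) :
    ∃ S : LieSubalgebra K L, finrank K S + 1 = finrank K L ∧
      Nonempty (derivedSeries K S 1 ≃ₗ⁅K⁆ derivedSeries K L 1) ∧ Nonempty (L ≃ₗ⁅K⁆ K × S) := by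
  have hc0 : c ≠ 0 := fun h => hcD (h ▸ zero_mem _)
  obtain ⟨q, hDq, hq⟩ := ((disjoint_span_singleton' hc0).mpr hcD).exists_isCompl
  let S : LieSubalgebra K L :=
    { q with lie_mem' := fun {a b} _ _ => hDq (lie_mem_derivedSeries_one a b) }
  refine ⟨S, ?_, nonempty_lieEquiv_derivedSeries_of_sup_eq_top hc S hq.symm.sup_eq_top,
    nonempty_lieEquiv_prod_of_isCompl hc hc0 S hq.symm⟩
  rw [← finrank_span_singleton hc0 (K := K)]
  exact finrank_add_eq_of_isCompl hq

theorem exists_mem_center_lie_eq_of_mem_center {z y : L} {H : LieIdeal K L}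
    (hsup : K ∙ z ⊔ K ∙ y ⊔ H.toSubmodule = ⊤) (hy : ∀ x ∈ H, ⁅y, x⁆ = 0) {c : L}
    (hc : c ∈ center K L) (hcH : c ∉ H) : ∃ w : H, w ∈ center K H ∧ ⁅z, y⁆ = ⁅z, (w : L)⁆ := by
  obtain ⟨_, hu, h, hh, rfl⟩ := mem_sup.mp (hsup ▸ mem_top : c ∈ _)
  obtain ⟨_, ha, _, hb, rfl⟩ := mem_sup.mp hu
  obtain ⟨a, rfl⟩ := mem_span_singleton.mp ha
  obtain ⟨b, rfl⟩ := mem_span_singleton.mp hb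
  have hcx : ∀ x, ⁅x, a • z + b • y + h⁆ = 0 := (LieModule.mem_maxTrivSubmodule K L L _).mp hc
  have hzy : a • ⁅y, z⁆ = 0 := by
    have := hcx y
    rwa [lie_add, lie_add, lie_smul, lie_smul, lie_self, smul_zero, add_zero, hy h hh,
      add_zero] at this
  by_cases ha0 : a = 0
  · subst ha0
    have hb0 : b ≠ 0 := by rintro rfl; exact hcH (by simpa using hh)
    refine ⟨(-b⁻¹) • ⟨h, hh⟩, ?_, ?_⟩
    · refine (center K H).smul_mem _ ((LieModule.mem_maxTrivSubmodule K H H _).mpr fun x => ?_)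
      have := hcx x
      rw [zero_smul, zero_add, lie_add, lie_smul, ← lie_skew, hy x x.2, neg_zero, smul_zero,
        zero_add] at this
      exact Subtype.ext this
    · have hzh : ⁅z, h⁆ = -(b • ⁅z, y⁆) := by
        have := hcx z
        rw [zero_smul, zero_add, lie_add, lie_smul] at this
        exact eq_neg_of_add_eq_zero_right this
      change ⁅z, y⁆ = ⁅z, (-b⁻¹) • h⁆
      rw [lie_smul, hzh, smul_neg, neg_smul, neg_neg, smul_smul, inv_mul_cancel₀ hb0, one_smul]
  · refine ⟨0, zero_mem _, ?_⟩
    rw [← lie_skew, (smul_eq_zero.mp hzy).resolve_left ha0, neg_zero]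
    exact (lie_zero z).symm

section Prod

variable {L₁ L₂ : Type*} [LieRing L₁] [LieAlgebra K L₁] [LieRing L₂] [LieAlgebra K L₂]

theorem finrank_derivedSeries_le_of_lieEquiv_prod [FiniteDimensional K L₁]
    [FiniteDimensional K L₂] (e : L ≃ₗ⁅K⁆ L₁ × L₂) :
    finrank K (derivedSeries K L 1) ≤
      finrank K (derivedSeries K L₁ 1) + finrank K (derivedSeries K L₂ 1) := by
  let D₁ := (derivedSeries K L₁ 1).toSubmodule.map (LinearMap.inl K L₁ L₂)
  let D₂ := (derivedSeries K L₂ 1).toSubmodule.map (LinearMap.inr K L₁ L₂)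
  have hle : (derivedSeries K L 1).toSubmodule.map e.toLinearEquiv.toLinearMap ≤ D₁ ⊔ D₂ := by
    rintro _ ⟨x, hx, rfl⟩
    have hex := e.toLieHom.map_mem_derivedSeries hx
    change e x ∈ D₁ ⊔ D₂
    rw [← Prod.fst_add_snd (e x)]
    exact add_mem_sup (mem_map_of_mem ((LieHom.fst K L₁ L₂).map_mem_derivedSeries hex))
      (mem_map_of_mem ((LieHom.snd K L₁ L₂).map_mem_derivedSeries hex))
  calc finrank K (derivedSeries K L 1)
      = finrank K ((derivedSeries K L 1).toSubmodule.map e.toLinearEquiv.toLinearMap) :=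
        (LinearEquiv.finrank_map_eq _ _).symm
    _ ≤ finrank K (D₁ ⊔ D₂ : Submodule K (L₁ × L₂)) := finrank_mono hle
    _ ≤ finrank K D₁ + finrank K D₂ := finrank_add_le_finrank_add_finrank _ _
    _ ≤ _ := add_le_add (finrank_map_le _ _) (finrank_map_le _ _)

theorem exists_mem_center_notMem_derivedSeries_of_fst_notMem [FiniteDimensional K L]
    [IsSolvable L] [Nontrivial L₂] (e : L ≃ₗ⁅K⁆ L₁ × L₂)
    (hrank : finrank K L ≤ finrank K (derivedSeries K L 1) + 2) {y : L}
    (hyD : ∀ d ∈ derivedSeries K L 1, ⁅y, d⁆ = 0) (hy₁ : (e y).1 ∉ derivedSeries K L₁ 1) :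
    ∃ c ∈ center K L, c ∉ derivedSeries K L 1 := by
  have : FiniteDimensional K L₁ :=
    .of_surjective ((LieHom.fst K L₁ L₂).comp e.toLieHom : L →ₗ[K] L₁) fun x =>
      ⟨e.symm (x, 0), by simp⟩
  have : FiniteDimensional K L₂ :=
    .of_surjective ((LieHom.snd K L₁ L₂).comp e.toLieHom : L →ₗ[K] L₂) fun x =>
      ⟨e.symm (0, x), by simp⟩
  have : IsSolvable L₂ := Function.Surjective.lieAlgebra_isSolvable
    (f := (LieHom.snd K L₁ L₂).comp e.toLieHom) fun x => ⟨e.symm (0, x), by simp⟩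
  have hdim : finrank K L = finrank K L₁ + finrank K L₂ :=
    e.toLinearEquiv.finrank_eq.trans finrank_prod
  have := finrank_derivedSeries_le_of_lieEquiv_prod e
  have := finrank_derivedSeries_lt (K := K) (L := L₂)
  have hcenter : (e y).1 ∈ center K L₁ := by
    refine mem_center_of_finrank_le_finrank_derivedSeries_add_one hy₁ (by omega) fun d hd => ?_
    have hd' : e.symm (d, 0) ∈ derivedSeries K L 1 :=
      e.symm.toLieHom.map_mem_derivedSeries ((LieHom.inl K L₁ L₂).map_mem_derivedSeries hd)
    have h := congrArg e (hyD _ hd')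
    rw [e.map_lie, e.apply_symm_apply, map_zero] at h
    exact congrArg Prod.fst h
  refine ⟨e.symm ((e y).1, 0), e.symm.map_mem_center (inl_mem_center hcenter), fun h => hy₁ ?_⟩
  simpa using (LieHom.fst K L₁ L₂).map_mem_derivedSeries (e.toLieHom.map_mem_derivedSeries h)

theorem exists_mem_center_notMem_derivedSeries_of_lieEquiv_prod [FiniteDimensional K L]
    [IsSolvable L] [Nontrivial L₁] [Nontrivial L₂] (e : L ≃ₗ⁅K⁆ L₁ × L₂)
    (hrank : finrank K L ≤ finrank K (derivedSeries K L 1) + 2) {y : L}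
    (hy : y ∉ derivedSeries K L 1) (hyD : ∀ d ∈ derivedSeries K L 1, ⁅y, d⁆ = 0) :
    ∃ c ∈ center K L, c ∉ derivedSeries K L 1 := by
  by_cases h₁ : (e y).1 ∈ derivedSeries K L₁ 1
  · refine exists_mem_center_notMem_derivedSeries_of_fst_notMem
      (e.trans (LieEquiv.prodComm K L₁ L₂)) hrank hyD fun h₂ => hy ?_
    have hey : e y ∈ derivedSeries K (L₁ × L₂) 1 :=
      Prod.fst_add_snd (e y) ▸ add_mem ((LieHom.inl K L₁ L₂).map_mem_derivedSeries h₁)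
        ((LieHom.inr K L₁ L₂).map_mem_derivedSeries h₂)
    simpa using e.symm.toLieHom.map_mem_derivedSeries hey
  · exact exists_mem_center_notMem_derivedSeries_of_fst_notMem e hrank hyD h₁

end Prod

end Field

end LieAlgebra

theorem stmt16_general (n : ℕ) (L : Type) [LieRing L] [LieAlgebra ℝ L]
    [FiniteDimensional ℝ L] [LieAlgebra.IsSolvable L]
    (hdim : Module.finrank ℝ L = n + 2)
    (H : LieIdeal ℝ L) (hH : H = LieAlgebra.derivedSeries ℝ L 1)
    (hHdim : Module.finrank ℝ ↥H = n)
    (z y : L)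
    (hsup : Submodule.span ℝ {z} ⊔ Submodule.span ℝ {y} ⊔ H.toSubmodule = ⊤)
    (hy : ∀ x ∈ H, ⁅y, x⁆ = 0) :
    List.TFAE
      [ Decomposable L,
        ∃ (L' : Type) (_ : LieRing L') (_ : LieAlgebra ℝ L'),
          LieAlgebra.IsSolvable L' ∧ Module.finrank ℝ L' = n + 1 ∧
          Nonempty (↥(LieAlgebra.derivedSeries ℝ L' 1) ≃ₗ⁅ℝ⁆ ↥H) ∧
          Nonempty (L ≃ₗ⁅ℝ⁆ (ℝ × L')),
        ∃ w : ↥H, w ∈ LieAlgebra.center ℝ ↥H ∧ ⁅z, y⁆ = ⁅z, (w : L)⁆ ] := by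
  have hyH : y ∉ H := fun h => notMem_span_singleton_sup_of_finrank_eq_add_two hsup
    (by rw [hdim, ← hHdim]; rfl) (mem_sup_right h)
  subst hH
  tfae_have 1 → 3 := by
    rintro ⟨L₁, L₂, _, _, _, _, _, _, ⟨e⟩⟩
    obtain ⟨c, hc, hcH⟩ :=
      exists_mem_center_notMem_derivedSeries_of_lieEquiv_prod e (by omega) hyH hy
    exact exists_mem_center_lie_eq_of_mem_center hsup hy hc hcH
  tfae_have 3 → 2 := by
    rintro ⟨w, hw, hzw⟩
    obtain ⟨S, hS, hDS, hLS⟩ := exists_lieSubalgebra_lieEquiv_prod_of_mem_center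
      (sub_mem_center_of_lie_eq hsup hy hw hzw) fun h => hyH (by simpa using add_mem h w.2)
    exact ⟨S, _, _, Function.Injective.lieAlgebra_isSolvable (f := S.incl) Subtype.val_injective,
      by omega, hDS, hLS⟩
  tfae_have 2 → 1 := by
    rintro ⟨L', _, _, -, hdimL', -, he⟩
    exact ⟨ℝ, L', _, _, _, _, inferInstance,
      Module.nontrivial_of_finrank_pos (R := ℝ) (by omega), he⟩
  tfae_finish

/-- Let `L` be a solvable real Lie algebra of dimension `n + 2` (`n ≥ 2`) whose derived
algebra `H := [L,L]` is nilpotent of dimension `n`, and `z, y ∈ L` with `L = ℝz ⊕ ℝy ⊕ H`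
as vector spaces and `⁅y, H⁆ = 0`. TFAE: (i) `L` is decomposable; (ii) `L ≅ ℝ × L'` for
some solvable `L'` with `dim L' = n + 1` and `[L',L'] ≅ H`; (iii) there is `w ∈ Z(H)`
with `⁅z, y⁆ = ⁅z, w⁆`. -/
theorem stmt16 (n : ℕ) (hn : 2 ≤ n) (L : Type) [LieRing L] [LieAlgebra ℝ L]
    [FiniteDimensional ℝ L] [LieAlgebra.IsSolvable L]
    (hdim : Module.finrank ℝ L = n + 2)
    (H : LieIdeal ℝ L) (hH : H = LieAlgebra.derivedSeries ℝ L 1)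
    (hnil : LieRing.IsNilpotent ↥H)
    (hHdim : Module.finrank ℝ ↥H = n)
    (z y : L)
    (hsup : Submodule.span ℝ {z} ⊔ Submodule.span ℝ {y} ⊔ H.toSubmodule = ⊤)
    (hzind : Submodule.span ℝ {z} ⊓ (Submodule.span ℝ {y} ⊔ H.toSubmodule) = ⊥)
    (hyind : Submodule.span ℝ {y} ⊓ H.toSubmodule = ⊥)
    (hy : ∀ x ∈ H, ⁅y, x⁆ = 0) :
    List.TFAE
      [ Decomposable L,
        ∃ (L' : Type) (_ : LieRing L') (_ : LieAlgebra ℝ L'),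
          LieAlgebra.IsSolvable L' ∧ Module.finrank ℝ L' = n + 1 ∧
          Nonempty (↥(LieAlgebra.derivedSeries ℝ L' 1) ≃ₗ⁅ℝ⁆ ↥H) ∧
          Nonempty (L ≃ₗ⁅ℝ⁆ (ℝ × L')),
        ∃ w : ↥H, w ∈ LieAlgebra.center ℝ ↥H ∧ ⁅z, y⁆ = ⁅z, (w : L)⁆ ] :=
  stmt16_general n L hdim H hH hHdim z y hsup hy
end

section
/- Let n ≥ 2 and, for i = 1, 2, let Li be a solvable real Lie algebra with dim Li = n + 2 whose derived algebra Hi := [Li, Li] is nilpotent of dimension n, and let zi, yi ∈ Li be such that Li = ℝzi ⊕ ℝyi ⊕ Hi as vector spaces and [yi, x] = 0 for all x ∈ Hi. Set Ki := ℝyi ⊕ Hi. Then every Lie algebra isomorphism φ : L1 → L2 maps K1 onto K2. -/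
/-!
The subspace `K = ℝy ⊕ H` can be described intrinsically as `C_L(H) + H`, where `C_L(H)` is the
centralizer of the derived algebra `H`; an isomorphism preserves derived algebras and
centralizers, hence maps `K₁` onto `K₂`.

The inclusion `ℝy + H ⊆ C_L(H) + H` is immediate. Conversely, if some `a z + c y + h` with
`a ≠ 0` centralizes `H`, then `⁅z, H⁆ ⊆ ⁅H, H⁆`, so `H = [L, L] ⊆ ℝ⁅z, y⁆ + ⁅H, H⁆`. A nilpotent
Lie algebra spanned by one vector modulo its derived algebra is at most one-dimensional, which
contradicts `dim H ≥ 2`.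
-/

open LieAlgebra Module

section Centralizer

variable {R L L' : Type*} [CommRing R] [LieRing L] [LieAlgebra R L] [LieRing L'] [LieAlgebra R L']

def Submodule.lieCentralizer (S : Submodule R L) : Submodule R L where
  carrier := {x | ∀ h ∈ S, ⁅x, h⁆ = 0}
  add_mem' ha hb h hh := by rw [add_lie, ha h hh, hb h hh, add_zero]
  zero_mem' h _ := zero_lie h
  smul_mem' c _ ha h hh := by rw [smul_lie, ha h hh, smul_zero]

theorem Submodule.mem_lieCentralizer {S : Submodule R L} {x : L} :
    x ∈ S.lieCentralizer ↔ ∀ h ∈ S, ⁅x, h⁆ = 0 :=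
  Iff.rfl

theorem Submodule.map_lieCentralizer (e : L ≃ₗ⁅R⁆ L') (S : Submodule R L) :
    S.lieCentralizer.map e.toLieHom.toLinearMap =
      (S.map e.toLieHom.toLinearMap).lieCentralizer := by
  ext x
  constructor
  · rintro ⟨c, hc, rfl⟩ _ ⟨h, hh, rfl⟩
    change ⁅e c, e h⁆ = 0
    rw [← e.map_lie, hc h hh, map_zero]
  · intro hx
    refine ⟨e.symm x, fun h hh => e.injective ?_, e.apply_symm_apply x⟩
    change e ⁅e.symm x, h⁆ = e 0
    rw [e.map_lie, e.apply_symm_apply, map_zero]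
    exact hx (e h) ⟨h, hh, rfl⟩

end Centralizer

theorem LieModule.eq_bot_of_le_top_lie {R L M : Type*} [CommRing R] [LieRing L] [LieAlgebra R L]
    [AddCommGroup M] [Module R M] [LieRingModule L M] [LieModule R L M] [LieModule.IsNilpotent L M]
    {N : LieSubmodule R L M} (h : N ≤ ⁅(⊤ : LieIdeal R L), N⁆) : N = ⊥ := by
  have hle : ∀ k, N ≤ lowerCentralSeries R L M k := by
    intro k
    induction k with
    | zero => exact le_top
    | succ k ih =>
      rw [lowerCentralSeries_succ]
      exact h.trans (LieSubmodule.mono_lie_right ⊤ ih)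
  obtain ⟨k, hk⟩ := IsNilpotent.nilpotent R L M
  exact le_bot_iff.1 (hk ▸ hle k)

theorem LieAlgebra.derivedSeries_one_le_of_lie_mem {R L : Type*} [CommRing R] [LieRing L]
    [LieAlgebra R L] {s : Set L} (hs : Submodule.span R s = ⊤) {M : Submodule R L}
    (h : ∀ u ∈ s, ∀ w ∈ s, ⁅u, w⁆ ∈ M) : (derivedSeries R L 1).toSubmodule ≤ M := by
  have hleft : ∀ u ∈ s, ∀ w, ⁅u, w⁆ ∈ M := fun u hu w =>
    (Submodule.span_le (p := M.comap (ad R L u))).2 (h u hu) (hs ▸ Submodule.mem_top)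
  have hall : ∀ u w : L, ⁅u, w⁆ ∈ M := fun u w =>
    (Submodule.span_le (p := M.comap (ad R L u))).2
      (fun w hw => by
        change ⁅u, w⁆ ∈ M
        rw [← lie_skew]
        exact M.neg_mem (hleft w hw u))
      (hs ▸ Submodule.mem_top)
  intro x hx
  refine (Submodule.span_le.2 ?_) ((coe_derivedSeries_one_eq R L).le hx)
  rintro _ ⟨u, w, rfl⟩
  exact hall u w

theorem LieIdeal.finrank_le_one_of_le_span_singleton_sup_lie {K L : Type*} [Field K] [LieRing L]
    [LieAlgebra K L] {H : LieIdeal K L} [LieModule.IsNilpotent H H] {v : L} (hv : v ∈ H)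
    (hle : H.toSubmodule ≤ Submodule.span K {v} ⊔ ⁅H, H⁆.toSubmodule) : finrank K H ≤ 1 := by
  set v' : H := ⟨v, hv⟩
  have hspan : Submodule.span K {v'} ⊔ (derivedSeries K H 1).toSubmodule = ⊤ := by
    rw [eq_top_iff]
    rintro ⟨g, hg⟩ -
    obtain ⟨_, hp, d, hd, rfl⟩ := Submodule.mem_sup.1 (hle hg)
    obtain ⟨c, rfl⟩ := Submodule.mem_span_singleton.1 hp
    refine Submodule.mem_sup.2 ⟨c • v',
      Submodule.smul_mem _ _ (Submodule.mem_span_singleton_self _),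
      ⟨d, LieSubmodule.lie_le_left H H hd⟩, ?_, rfl⟩
    rw [LieSubmodule.mem_toSubmodule, LieIdeal.derivedSeries_eq_derivedSeriesOfIdeal_comap]
    simpa using hd
  have hD : derivedSeries K H 1 ≤ ⁅(⊤ : LieIdeal K H), derivedSeries K H 1⁆ := by
    rw [← LieSubmodule.toSubmodule_le_toSubmodule]
    refine derivedSeries_one_le_of_lie_mem (s := {v'} ∪ derivedSeries K H 1) ?_ ?_
    · rw [Submodule.span_union, ← hspan]
      exact congrArg _ (Submodule.span_eq (derivedSeries K H 1).toSubmodule)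
    rintro u (rfl | hu) w (rfl | hw)
    · simp
    · exact LieSubmodule.lie_mem_lie (LieSubmodule.mem_top _) hw
    · rw [← lie_skew]
      exact neg_mem (LieSubmodule.lie_mem_lie (LieSubmodule.mem_top _) hu)
    · exact LieSubmodule.lie_mem_lie (LieSubmodule.mem_top _) hw
  rw [LieModule.eq_bot_of_le_top_lie hD, LieSubmodule.bot_toSubmodule, sup_bot_eq] at hspan
  exact finrank_le_one v' fun w => Submodule.mem_span_singleton.1 (hspan ▸ Submodule.mem_top)

section DerivedAlgebraComplement

variable {K L : Type*} [Field K] [LieRing L] [LieAlgebra K L] {H : LieIdeal K L} {z y : L}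

theorem LieIdeal.toSubmodule_le_span_lie_sup_lie
    (hsup : Submodule.span K {z} ⊔ Submodule.span K {y} ⊔ H.toSubmodule = ⊤)
    (hH : H = derivedSeries K L 1) (hy : ∀ x ∈ H, ⁅y, x⁆ = 0) (hz : ∀ g ∈ H, ⁅z, g⁆ ∈ ⁅H, H⁆) :
    H.toSubmodule ≤ Submodule.span K {⁅z, y⁆} ⊔ ⁅H, H⁆.toSubmodule := by
  set M := Submodule.span K {⁅z, y⁆} ⊔ ⁅H, H⁆.toSubmodule
  have hs : Submodule.span K ({z} ∪ {y} ∪ (H : Set L)) = ⊤ := by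
    rw [Submodule.span_union, Submodule.span_union, ← hsup]
    exact congrArg _ (Submodule.span_eq H.toSubmodule)
  have hzy : ⁅z, y⁆ ∈ M := Submodule.mem_sup_left (Submodule.mem_span_singleton_self _)
  have hzH : ∀ g ∈ H, ⁅z, g⁆ ∈ M := fun g hg => Submodule.mem_sup_right (hz g hg)
  refine (le_of_eq (congrArg _ hH)).trans (derivedSeries_one_le_of_lie_mem hs ?_)
  rintro u ((rfl | rfl) | hu) w ((rfl | rfl) | hw)
  · simp
  · exact hzy
  · exact hzH w hw
  · rw [← lie_skew]; exact M.neg_mem hzy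
  · simp
  · simp [hy w hw]
  · rw [← lie_skew]; exact M.neg_mem (hzH u hu)
  · simp [← lie_skew u, hy u hu]
  · exact Submodule.mem_sup_right (LieSubmodule.lie_mem_lie hu hw)

theorem Submodule.lieCentralizer_le_span_singleton_sup
    (hsup : Submodule.span K {z} ⊔ Submodule.span K {y} ⊔ H.toSubmodule = ⊤)
    (hy : ∀ x ∈ H, ⁅y, x⁆ = 0) (hz : ¬ ∀ g ∈ H, ⁅z, g⁆ ∈ ⁅H, H⁆) :
    H.toSubmodule.lieCentralizer ≤ Submodule.span K {y} ⊔ H.toSubmodule := by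
  intro x hx
  have hx' : x ∈ Submodule.span K {z} ⊔ (Submodule.span K {y} ⊔ H.toSubmodule) := by
    rw [← sup_assoc, hsup]; trivial
  obtain ⟨_, hp, k, hk, rfl⟩ := Submodule.mem_sup.1 hx'
  obtain ⟨a, rfl⟩ := Submodule.mem_span_singleton.1 hp
  obtain rfl | ha := eq_or_ne a 0
  · simpa using hk
  refine absurd (fun g hg => ?_) hz
  obtain ⟨_, hp', h, hh, rfl⟩ := Submodule.mem_sup.1 hk
  obtain ⟨c, rfl⟩ := Submodule.mem_span_singleton.1 hp'
  have hcomm : a • ⁅z, g⁆ + ⁅h, g⁆ = 0 := by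
    simpa [add_lie, smul_lie, hy g hg] using mem_lieCentralizer.1 hx g hg
  have hzg : ⁅z, g⁆ = a⁻¹ • -⁅h, g⁆ := by
    rw [← eq_neg_of_add_eq_zero_left hcomm, inv_smul_smul₀ ha]
  rw [hzg]
  exact smul_mem _ _ (neg_mem (LieSubmodule.lie_mem_lie hh hg))

theorem LieIdeal.lieCentralizer_sup_eq_span_singleton_sup
    (hsup : Submodule.span K {z} ⊔ Submodule.span K {y} ⊔ H.toSubmodule = ⊤)
    (hH : H = derivedSeries K L 1) [LieModule.IsNilpotent H H] (hdim : 2 ≤ finrank K H)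
    (hy : ∀ x ∈ H, ⁅y, x⁆ = 0) :
    H.toSubmodule.lieCentralizer ⊔ H.toSubmodule = Submodule.span K {y} ⊔ H.toSubmodule := by
  refine le_antisymm (sup_le ?_ le_sup_right) (sup_le ?_ le_sup_right)
  · by_cases hz : ∀ g ∈ H, ⁅z, g⁆ ∈ ⁅H, H⁆
    · have hzy : ⁅z, y⁆ ∈ H := hH ▸ LieSubmodule.lie_mem_lie (LieSubmodule.mem_top z)
        (LieSubmodule.mem_top y)
      have := finrank_le_one_of_le_span_singleton_sup_lie hzy
        (toSubmodule_le_span_lie_sup_lie hsup hH hy hz)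
      omega
    · exact Submodule.lieCentralizer_le_span_singleton_sup hsup hy hz
  · exact (Submodule.span_singleton_le_iff_mem _ _).2
      (Submodule.mem_sup_left (Submodule.mem_lieCentralizer.2 hy))

end DerivedAlgebraComplement

theorem stmt19_general (n : ℕ) (hn : 2 ≤ n)
    (L₁ : Type) [LieRing L₁] [LieAlgebra ℝ L₁]
    (L₂ : Type) [LieRing L₂] [LieAlgebra ℝ L₂]
    (H₁ : LieIdeal ℝ L₁) (hH₁ : H₁ = LieAlgebra.derivedSeries ℝ L₁ 1)
    (H₂ : LieIdeal ℝ L₂) (hH₂ : H₂ = LieAlgebra.derivedSeries ℝ L₂ 1)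
    (hnil₁ : LieModule.IsNilpotent ↥H₁ ↥H₁) (hnil₂ : LieModule.IsNilpotent ↥H₂ ↥H₂)
    (hHdim₁ : Module.finrank ℝ ↥H₁ = n) (hHdim₂ : Module.finrank ℝ ↥H₂ = n)
    (z₁ y₁ : L₁) (z₂ y₂ : L₂)
    (hsup₁ : Submodule.span ℝ {z₁} ⊔ Submodule.span ℝ {y₁} ⊔ H₁.toSubmodule = ⊤)
    (hsup₂ : Submodule.span ℝ {z₂} ⊔ Submodule.span ℝ {y₂} ⊔ H₂.toSubmodule = ⊤)
    (hy₁ : ∀ x ∈ H₁, ⁅y₁, x⁆ = 0) (hy₂ : ∀ x ∈ H₂, ⁅y₂, x⁆ = 0) :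
    ∀ φ : L₁ ≃ₗ⁅ℝ⁆ L₂,
      Submodule.map φ.toLieHom.toLinearMap (Submodule.span ℝ {y₁} ⊔ H₁.toSubmodule)
        = Submodule.span ℝ {y₂} ⊔ H₂.toSubmodule := by
  intro φ
  have hφH : H₁.toSubmodule.map φ.toLieHom.toLinearMap = H₂.toSubmodule := by
    rw [hH₁, hH₂, ← LieIdeal.derivedSeries_map_eq 1 φ.surjective,
      LieIdeal.coe_map_of_surjective φ.surjective]
  rw [← LieIdeal.lieCentralizer_sup_eq_span_singleton_sup hsup₁ hH₁ (by omega) hy₁,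
    ← LieIdeal.lieCentralizer_sup_eq_span_singleton_sup hsup₂ hH₂ (by omega) hy₂,
    Submodule.map_sup, Submodule.map_lieCentralizer, hφH]

/-- For `i = 1, 2`, let `Lᵢ` be a solvable real Lie algebra of dimension `n + 2` (`n ≥ 2`)
whose derived algebra `Hᵢ := [Lᵢ,Lᵢ]` is nilpotent of dimension `n`, with `zᵢ, yᵢ ∈ Lᵢ`
such that `Lᵢ = ℝzᵢ ⊕ ℝyᵢ ⊕ Hᵢ` as vector spaces and `⁅yᵢ, Hᵢ⁆ = 0`; set
`Kᵢ := ℝyᵢ ⊕ Hᵢ`. Then every Lie algebra isomorphism `φ : L₁ → L₂` maps `K₁` onto `K₂`. -/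
theorem stmt19 (n : ℕ) (hn : 2 ≤ n)
    (L₁ : Type) [LieRing L₁] [LieAlgebra ℝ L₁] [FiniteDimensional ℝ L₁]
    [LieAlgebra.IsSolvable L₁]
    (L₂ : Type) [LieRing L₂] [LieAlgebra ℝ L₂] [FiniteDimensional ℝ L₂]
    [LieAlgebra.IsSolvable L₂]
    (hdim₁ : Module.finrank ℝ L₁ = n + 2) (hdim₂ : Module.finrank ℝ L₂ = n + 2)
    (H₁ : LieIdeal ℝ L₁) (hH₁ : H₁ = LieAlgebra.derivedSeries ℝ L₁ 1)
    (H₂ : LieIdeal ℝ L₂) (hH₂ : H₂ = LieAlgebra.derivedSeries ℝ L₂ 1)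
    (hnil₁ : LieModule.IsNilpotent ↥H₁ ↥H₁) (hnil₂ : LieModule.IsNilpotent ↥H₂ ↥H₂)
    (hHdim₁ : Module.finrank ℝ ↥H₁ = n) (hHdim₂ : Module.finrank ℝ ↥H₂ = n)
    (z₁ y₁ : L₁) (z₂ y₂ : L₂)
    (hsup₁ : Submodule.span ℝ {z₁} ⊔ Submodule.span ℝ {y₁} ⊔ H₁.toSubmodule = ⊤)
    (hzind₁ : Submodule.span ℝ {z₁} ⊓ (Submodule.span ℝ {y₁} ⊔ H₁.toSubmodule) = ⊥)
    (hyind₁ : Submodule.span ℝ {y₁} ⊓ H₁.toSubmodule = ⊥)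
    (hsup₂ : Submodule.span ℝ {z₂} ⊔ Submodule.span ℝ {y₂} ⊔ H₂.toSubmodule = ⊤)
    (hzind₂ : Submodule.span ℝ {z₂} ⊓ (Submodule.span ℝ {y₂} ⊔ H₂.toSubmodule) = ⊥)
    (hyind₂ : Submodule.span ℝ {y₂} ⊓ H₂.toSubmodule = ⊥)
    (hy₁ : ∀ x ∈ H₁, ⁅y₁, x⁆ = 0) (hy₂ : ∀ x ∈ H₂, ⁅y₂, x⁆ = 0) :
    ∀ φ : L₁ ≃ₗ⁅ℝ⁆ L₂,
      Submodule.map φ.toLieHom.toLinearMap (Submodule.span ℝ {y₁} ⊔ H₁.toSubmodule)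
        = Submodule.span ℝ {y₂} ⊔ H₂.toSubmodule :=
  stmt19_general n hn L₁ L₂ H₁ hH₁ H₂ hH₂ hnil₁ hnil₂ hHdim₁ hHdim₂ z₁ y₁ z₂ y₂ hsup₁ hsup₂ hy₁ hy₂
end
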